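/- arXiv:2405.01493 — 6 statements merged into one kernel-verified Lean document; each statement's English description precedes it below -/
import Mathlib

section
/- Let (β, γ, X_i, Y_j, N_h) be a bipartite coherent configuration equipped with a second basis L_r, R_s, D_h as above. Then for every 0 ≤ h ≤ t̃_{βγ}: m_h^β = (1/|γ|) Σ_{i=1}^{t_{βγ}} (Q^{βγ}_{i,h})² k_i^{βγ}, where k_i^{βγ} is the common row sum of N_i; and moreover m_h^β = m_h^γ. -/
open Matrix

/-- A bipartite coherent configuration on point set `β` and block set `γ`, with
Schur idempotents `X 0, …, X tb` (on `β`), `Y 0, …, Y tg` (on `γ`) and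
`N 1, …, N tbg` (from `β` to `γ`), satisfying (C1)–(C6). -/
structure BipartiteCC (β γ : Type) [Fintype β] [DecidableEq β] [Fintype γ] [DecidableEq γ] where
  tb : ℕ
  tg : ℕ
  tbg : ℕ
  tb_pos : 1 ≤ tb
  tg_pos : 1 ≤ tg
  tbg_pos : 1 ≤ tbg
  X : ℕ → Matrix β β ℝ
  Y : ℕ → Matrix γ γ ℝ
  N : ℕ → Matrix β γ ℝ
  X_zero_one : ∀ i, i ≤ tb → ∀ u v, X i u v = 0 ∨ X i u v = 1
  Y_zero_one : ∀ j, j ≤ tg → ∀ u v, Y j u v = 0 ∨ Y j u v = 1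
  N_zero_one : ∀ h, 1 ≤ h → h ≤ tbg → ∀ u v, N h u v = 0 ∨ N h u v = 1
  X_ne_zero : ∀ i, i ≤ tb → X i ≠ 0
  Y_ne_zero : ∀ j, j ≤ tg → Y j ≠ 0
  N_ne_zero : ∀ h, 1 ≤ h → h ≤ tbg → N h ≠ 0
  /-- (C1) -/
  X_zero : X 0 = 1
  /-- (C1) -/
  Y_zero : Y 0 = 1
  /-- (C2), `ββ` block -/
  X_sum : ∑ i ∈ Finset.range (tb + 1), X i = Matrix.of fun _ _ => (1 : ℝ)
  /-- (C2), `γγ` block -/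
  Y_sum : ∑ j ∈ Finset.range (tg + 1), Y j = Matrix.of fun _ _ => (1 : ℝ)
  /-- (C2), `βγ` block -/
  N_sum : ∑ h ∈ Finset.Icc 1 tbg, N h = Matrix.of fun _ _ => (1 : ℝ)
  /-- (C3) -/
  X_transpose : ∀ i, i ≤ tb → ∃ i', i' ≤ tb ∧ (X i)ᵀ = X i'
  /-- (C3) -/
  Y_transpose : ∀ j, j ≤ tg → ∃ j', j' ≤ tg ∧ (Y j)ᵀ = Y j'
  /-- (C4) -/
  X_mul_X : ∀ i, i ≤ tb → ∀ j, j ≤ tb →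
      X i * X j ∈ Submodule.span ℝ {M | ∃ i', i' ≤ tb ∧ M = X i'}
  /-- (C4) -/
  Y_mul_Y : ∀ i, i ≤ tg → ∀ j, j ≤ tg →
      Y i * Y j ∈ Submodule.span ℝ {M | ∃ j', j' ≤ tg ∧ M = Y j'}
  /-- (C4) -/
  X_mul_N : ∀ i, i ≤ tb → ∀ h, 1 ≤ h → h ≤ tbg →
      X i * N h ∈ Submodule.span ℝ {M | ∃ h', 1 ≤ h' ∧ h' ≤ tbg ∧ M = N h'}
  /-- (C4) -/
  N_mul_Y : ∀ h, 1 ≤ h → h ≤ tbg → ∀ j, j ≤ tg →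
      N h * Y j ∈ Submodule.span ℝ {M | ∃ h', 1 ≤ h' ∧ h' ≤ tbg ∧ M = N h'}
  /-- (C4) -/
  N_mul_Nt : ∀ h, 1 ≤ h → h ≤ tbg → ∀ h', 1 ≤ h' → h' ≤ tbg →
      N h * (N h')ᵀ ∈ Submodule.span ℝ {M | ∃ i, i ≤ tb ∧ M = X i}
  /-- (C4) -/
  Nt_mul_N : ∀ h, 1 ≤ h → h ≤ tbg → ∀ h', 1 ≤ h' → h' ≤ tbg →
      (N h)ᵀ * N h' ∈ Submodule.span ℝ {M | ∃ j, j ≤ tg ∧ M = Y j}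
  /-- (C5) -/
  N_comm : ∀ i, 1 ≤ i → i ≤ tbg → ∀ j, 1 ≤ j → j ≤ tbg → N i * (N j)ᵀ = N j * (N i)ᵀ
  /-- (C5) -/
  Nt_comm : ∀ i, 1 ≤ i → i ≤ tbg → ∀ j, 1 ≤ j → j ≤ tbg → (N i)ᵀ * N j = (N j)ᵀ * N i
  /-- (C6) -/
  X_span : Submodule.span ℝ {M | ∃ i, i ≤ tb ∧ M = X i} =
      Submodule.span ℝ
        (insert 1 {M | ∃ i, 1 ≤ i ∧ i ≤ tbg ∧ ∃ j, 1 ≤ j ∧ j ≤ tbg ∧ M = N i * (N j)ᵀ})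
  /-- (C6) -/
  Y_span : Submodule.span ℝ {M | ∃ j, j ≤ tg ∧ M = Y j} =
      Submodule.span ℝ
        (insert 1 {M | ∃ i, 1 ≤ i ∧ i ≤ tbg ∧ ∃ j, 1 ≤ j ∧ j ≤ tbg ∧ M = (N i)ᵀ * N j})

/-- A second (spectral) basis `L 0, …, L tb`, `R 0, …, R tg`, `D 0, …, D (tbg - 1)` for a
bipartite coherent configuration, satisfying (D1)–(D4). -/
structure SecondBasis {β γ : Type} [Fintype β] [DecidableEq β] [Fintype γ] [DecidableEq γ]
    (cc : BipartiteCC β γ) where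
  L : ℕ → Matrix β β ℝ
  R : ℕ → Matrix γ γ ℝ
  D : ℕ → Matrix β γ ℝ
  /-- the `L`'s are linearly independent -/
  L_indep : LinearIndependent ℝ (fun r : Fin (cc.tb + 1) => L r.val)
  /-- the `R`'s are linearly independent -/
  R_indep : LinearIndependent ℝ (fun r : Fin (cc.tg + 1) => R r.val)
  /-- the `D`'s are linearly independent -/
  D_indep : LinearIndependent ℝ (fun r : Fin cc.tbg => D r.val)
  /-- the `L`'s span the same space as the `X`'s -/
  L_span : Submodule.span ℝ {M | ∃ r, r ≤ cc.tb ∧ M = L r} =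
      Submodule.span ℝ {M | ∃ i, i ≤ cc.tb ∧ M = cc.X i}
  /-- the `R`'s span the same space as the `Y`'s -/
  R_span : Submodule.span ℝ {M | ∃ r, r ≤ cc.tg ∧ M = R r} =
      Submodule.span ℝ {M | ∃ j, j ≤ cc.tg ∧ M = cc.Y j}
  /-- the `D`'s span the same space as the `N`'s -/
  D_span : Submodule.span ℝ {M | ∃ r, r ≤ cc.tbg - 1 ∧ M = D r} =
      Submodule.span ℝ {M | ∃ h, 1 ≤ h ∧ h ≤ cc.tbg ∧ M = cc.N h}
  /-- (D1) -/
  L_mul_L : ∀ r, r ≤ cc.tb → ∀ s, s ≤ cc.tb → L r * L s = if r = s then L r else 0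
  /-- (D1) -/
  R_mul_R : ∀ r, r ≤ cc.tg → ∀ s, s ≤ cc.tg → R r * R s = if r = s then R r else 0
  /-- (D2) -/
  L_zero : L 0 = ((Fintype.card β : ℝ))⁻¹ • Matrix.of fun _ _ => (1 : ℝ)
  /-- (D2) -/
  D_zero : D 0 = (Real.sqrt ((Fintype.card β : ℝ) * (Fintype.card γ : ℝ)))⁻¹ •
      Matrix.of fun _ _ => (1 : ℝ)
  /-- (D2) -/
  R_zero : R 0 = ((Fintype.card γ : ℝ))⁻¹ • Matrix.of fun _ _ => (1 : ℝ)
  /-- (D3) -/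
  L_sum : ∑ r ∈ Finset.range (cc.tb + 1), L r = 1
  /-- (D3) -/
  R_sum : ∑ r ∈ Finset.range (cc.tg + 1), R r = 1
  /-- (D4) -/
  L_eq_DDt : ∀ r, r ≤ cc.tbg - 1 → L r = D r * (D r)ᵀ
  /-- (D4) -/
  R_eq_DtD : ∀ r, r ≤ cc.tbg - 1 → R r = (D r)ᵀ * D r

private lemma pointwise_sq_sum (t : ℕ) (Q f : ℕ → ℝ)
    (h01 : ∀ j ∈ Finset.Icc 1 t, f j = 0 ∨ f j = 1)
    (hsum : ∑ j ∈ Finset.Icc 1 t, f j = 1) :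
    (∑ j ∈ Finset.Icc 1 t, Q j * f j) ^ 2 = ∑ j ∈ Finset.Icc 1 t, Q j ^ 2 * f j := by
  obtain ⟨j0, hj0, hf⟩ : ∃ j0 ∈ Finset.Icc 1 t, f j0 ≠ 0 := by
    by_contra hcon
    push_neg at hcon
    rw [Finset.sum_eq_zero hcon] at hsum
    norm_num at hsum
  have hf1 : f j0 = 1 := (h01 j0 hj0).resolve_left hf
  have hzero : ∀ j ∈ Finset.Icc 1 t, j ≠ j0 → f j = 0 := by
    intro j hj hne
    have hsplit := Finset.add_sum_erase _ f hj0
    have hrest : ∑ x ∈ (Finset.Icc 1 t).erase j0, f x = 0 := by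
      rw [hsum] at hsplit; linarith [hsplit, hf1]
    have hnn : ∀ x ∈ (Finset.Icc 1 t).erase j0, 0 ≤ f x := by
      intro x hx
      rcases h01 x (Finset.mem_of_mem_erase hx) with h | h <;> rw [h] <;> norm_num
    exact (Finset.sum_eq_zero_iff_of_nonneg hnn).mp hrest j (Finset.mem_erase.mpr ⟨hne, hj⟩)
  rw [Finset.sum_eq_single_of_mem j0 hj0 (fun j hj hne => by rw [hzero j hj hne]; ring),
    Finset.sum_eq_single_of_mem j0 hj0 (fun j hj hne => by rw [hzero j hj hne]; ring), hf1]
  ring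

/-- `m h ^ β = (1/|γ|) ∑ᵢ (Q i h)² k i ^ βγ`, and `m h ^ β = m h ^ γ`. -/
theorem bipartiteCC_multiplicity_formula (β γ : Type) [Fintype β] [DecidableEq β] [Nonempty β]
    [Fintype γ] [DecidableEq γ] [Nonempty γ] (cc : BipartiteCC β γ) (sb : SecondBasis cc)
    (Q : ℕ → ℕ → ℝ)
    (hQ : ∀ i, i ≤ cc.tbg - 1 →
      sb.D i = (Real.sqrt ((Fintype.card β : ℝ) * (Fintype.card γ : ℝ)))⁻¹ •
        ∑ j ∈ Finset.Icc 1 cc.tbg, Q j i • cc.N j)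
    (k : ℕ → ℝ)
    (hk : ∀ i, 1 ≤ i → i ≤ cc.tbg → ∀ u : β, ∑ v : γ, cc.N i u v = k i) :
    ∀ h, h ≤ cc.tbg - 1 →
      Matrix.trace (sb.L h) =
        ((Fintype.card γ : ℝ))⁻¹ * ∑ i ∈ Finset.Icc 1 cc.tbg, (Q i h) ^ 2 * k i ∧
      Matrix.trace (sb.L h) = Matrix.trace (sb.R h) := by
  intro h hh
  have hb : (0:ℝ) < (Fintype.card β : ℝ) := by exact_mod_cast Fintype.card_pos
  have hg : (0:ℝ) < (Fintype.card γ : ℝ) := by exact_mod_cast Fintype.card_pos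
  have hc2 : ((Real.sqrt ((Fintype.card β : ℝ) * (Fintype.card γ : ℝ)))⁻¹) ^ 2
      = ((Fintype.card β : ℝ) * (Fintype.card γ : ℝ))⁻¹ := by
    rw [inv_pow, Real.sq_sqrt (by positivity)]
  have hDentry : ∀ u v, sb.D h u v
      = (Real.sqrt ((Fintype.card β : ℝ) * (Fintype.card γ : ℝ)))⁻¹ *
        ∑ j ∈ Finset.Icc 1 cc.tbg, Q j h * cc.N j u v := by
    intro u v
    rw [hQ h hh]
    simp [Matrix.sum_apply, smul_eq_mul]
  have hNsum : ∀ u v, ∑ j ∈ Finset.Icc 1 cc.tbg, cc.N j u v = 1 := by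
    intro u v
    have := congrFun (congrFun cc.N_sum u) v
    simpa [Matrix.sum_apply] using this
  have hsq : ∀ u v, (sb.D h u v) ^ 2
      = ((Fintype.card β : ℝ) * (Fintype.card γ : ℝ))⁻¹ *
        ∑ j ∈ Finset.Icc 1 cc.tbg, Q j h ^ 2 * cc.N j u v := by
    intro u v
    rw [hDentry u v, mul_pow, hc2,
      pointwise_sq_sum cc.tbg (fun j => Q j h) (fun j => cc.N j u v)
        (fun j hj => cc.N_zero_one j (Finset.mem_Icc.mp hj).1 (Finset.mem_Icc.mp hj).2 u v)
        (hNsum u v)]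
  have htr : Matrix.trace (sb.L h) = ∑ u : β, ∑ v : γ, (sb.D h u v) ^ 2 := by
    rw [sb.L_eq_DDt h hh, Matrix.trace]
    simp [Matrix.mul_apply, Matrix.diag, sq]
  constructor
  · rw [htr]
    have swap : ∑ u : β, ∑ v : γ, ∑ j ∈ Finset.Icc 1 cc.tbg, Q j h ^ 2 * cc.N j u v
        = ∑ j ∈ Finset.Icc 1 cc.tbg, ∑ u : β, ∑ v : γ, Q j h ^ 2 * cc.N j u v := by
      rw [Finset.sum_congr rfl fun u _ => Finset.sum_comm]
      exact Finset.sum_comm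
    have inner : ∀ j ∈ Finset.Icc 1 cc.tbg,
        ∑ u : β, ∑ v : γ, Q j h ^ 2 * cc.N j u v
          = Q j h ^ 2 * ((Fintype.card β : ℝ) * k j) := by
      intro j hj
      obtain ⟨h1, h2⟩ := Finset.mem_Icc.mp hj
      simp only [← Finset.mul_sum, hk j h1 h2, Finset.sum_const, Finset.card_univ,
        nsmul_eq_mul]
    have key : ∑ u : β, ∑ v : γ, (sb.D h u v) ^ 2
        = ((Fintype.card β : ℝ) * (Fintype.card γ : ℝ))⁻¹ *
          ∑ j ∈ Finset.Icc 1 cc.tbg, Q j h ^ 2 * ((Fintype.card β : ℝ) * k j) := by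
      simp only [hsq, ← Finset.mul_sum]
      rw [swap, Finset.sum_congr rfl inner]
    rw [key, Finset.mul_sum, Finset.mul_sum]
    refine Finset.sum_congr rfl fun j _ => ?_
    field_simp
  · rw [sb.L_eq_DDt h hh, sb.R_eq_DtD h hh, Matrix.trace_mul_comm]
end

section
/- Let (β, γ, X_i, Y_j, N_h) be a bipartite coherent configuration equipped with a second basis L_r, R_s, D_h as above. Then for all 1 ≤ i, j ≤ t_{βγ}: N_i N_j^T = Σ_{r=0}^{t̃_{βγ}} P^{βγ}_{r,i} P^{βγ}_{r,j} L_r, and likewise N_i^T N_j = Σ_{r=0}^{t̃_{βγ}} P^{βγ}_{r,i} P^{βγ}_{r,j} R_r. -/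
open Matrix

lemma eq_zero_of_trace_mul_transpose_self_eq_zero {m n : Type} [Fintype m] [Fintype n]
    (A : Matrix m n ℝ) (h : (A * Aᵀ).trace = 0) : A = 0 := by
  ext i j
  have h' : ∑ i, ∑ j, (A i j) ^ 2 = 0 := by
    simpa [Matrix.trace, Matrix.diag, Matrix.mul_apply, sq] using h
  have h1 := (Finset.sum_eq_zero_iff_of_nonneg
    (fun i _ => Finset.sum_nonneg fun j _ => sq_nonneg (A i j))).mp h' i (Finset.mem_univ i)
  have h2 := (Finset.sum_eq_zero_iff_of_nonneg
    (fun j _ => sq_nonneg (A i j))).mp h1 j (Finset.mem_univ j)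
  simpa using sq_eq_zero_iff.mp h2

section AuxLemmas

variable {β γ : Type} [Fintype β] [DecidableEq β] [Fintype γ] [DecidableEq γ]

lemma bcc_eq_zero_of_trace {m n : Type} [Fintype m] [Fintype n]
    (A : Matrix m n ℝ) (h : (A * Aᵀ).trace = 0) : A = 0 := by
  ext i j
  have h' : ∑ i, ∑ j, (A i j) ^ 2 = 0 := by
    simpa [Matrix.trace, Matrix.diag, Matrix.mul_apply, sq] using h
  have h1 := (Finset.sum_eq_zero_iff_of_nonneg
    (fun i _ => Finset.sum_nonneg fun j _ => sq_nonneg (A i j))).mp h' i (Finset.mem_univ i)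
  have h2 := (Finset.sum_eq_zero_iff_of_nonneg
    (fun j _ => sq_nonneg (A i j))).mp h1 j (Finset.mem_univ j)
  simpa using sq_eq_zero_iff.mp h2

lemma bcc_commT (cc : BipartiteCC β γ) :
    ∀ M1 ∈ Submodule.span ℝ {M : Matrix β γ ℝ | ∃ h, 1 ≤ h ∧ h ≤ cc.tbg ∧ M = cc.N h},
    ∀ M2 ∈ Submodule.span ℝ {M : Matrix β γ ℝ | ∃ h, 1 ≤ h ∧ h ≤ cc.tbg ∧ M = cc.N h},
      M1ᵀ * M2 = M2ᵀ * M1 := by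
  intro M1 h1
  induction h1 using Submodule.span_induction with
  | mem x hx =>
    intro M2 h2
    induction h2 using Submodule.span_induction with
    | mem y hy =>
      obtain ⟨i, hi1, hi2, rfl⟩ := hx
      obtain ⟨j, hj1, hj2, rfl⟩ := hy
      exact cc.Nt_comm i hi1 hi2 j hj1 hj2
    | zero => simp
    | add a b _ _ ha hb => simp [Matrix.mul_add, Matrix.transpose_add, Matrix.add_mul, ha, hb]
    | smul c a _ ha =>
      simp only [Matrix.transpose_smul, Matrix.mul_smul, Matrix.smul_mul, ha]
  | zero => intro M2 _; simp
  | add a b _ _ ha hb =>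
    intro M2 h2
    simp [Matrix.transpose_add, Matrix.add_mul, Matrix.mul_add, ha M2 h2, hb M2 h2]
  | smul c a _ ha =>
    intro M2 h2
    simp only [Matrix.transpose_smul, Matrix.smul_mul, Matrix.mul_smul, ha M2 h2]

lemma bcc_commM (cc : BipartiteCC β γ) :
    ∀ M1 ∈ Submodule.span ℝ {M : Matrix β γ ℝ | ∃ h, 1 ≤ h ∧ h ≤ cc.tbg ∧ M = cc.N h},
    ∀ M2 ∈ Submodule.span ℝ {M : Matrix β γ ℝ | ∃ h, 1 ≤ h ∧ h ≤ cc.tbg ∧ M = cc.N h},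
      M1 * M2ᵀ = M2 * M1ᵀ := by
  intro M1 h1
  induction h1 using Submodule.span_induction with
  | mem x hx =>
    intro M2 h2
    induction h2 using Submodule.span_induction with
    | mem y hy =>
      obtain ⟨i, hi1, hi2, rfl⟩ := hx
      obtain ⟨j, hj1, hj2, rfl⟩ := hy
      exact cc.N_comm i hi1 hi2 j hj1 hj2
    | zero => simp
    | add a b _ _ ha hb => simp [Matrix.mul_add, Matrix.transpose_add, Matrix.add_mul, ha, hb]
    | smul c a _ ha =>
      simp only [Matrix.transpose_smul, Matrix.mul_smul, Matrix.smul_mul, ha]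
  | zero => intro M2 _; simp
  | add a b _ _ ha hb =>
    intro M2 h2
    simp [Matrix.transpose_add, Matrix.add_mul, Matrix.mul_add, ha M2 h2, hb M2 h2]
  | smul c a _ ha =>
    intro M2 h2
    simp only [Matrix.transpose_smul, Matrix.smul_mul, Matrix.mul_smul, ha M2 h2]

lemma bcc_memY (cc : BipartiteCC β γ) :
    ∀ M1 ∈ Submodule.span ℝ {M : Matrix β γ ℝ | ∃ h, 1 ≤ h ∧ h ≤ cc.tbg ∧ M = cc.N h},
    ∀ M2 ∈ Submodule.span ℝ {M : Matrix β γ ℝ | ∃ h, 1 ≤ h ∧ h ≤ cc.tbg ∧ M = cc.N h},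
      M1ᵀ * M2 ∈ Submodule.span ℝ {M : Matrix γ γ ℝ | ∃ j, j ≤ cc.tg ∧ M = cc.Y j} := by
  intro M1 h1
  induction h1 using Submodule.span_induction with
  | mem x hx =>
    intro M2 h2
    induction h2 using Submodule.span_induction with
    | mem y hy =>
      obtain ⟨i, hi1, hi2, rfl⟩ := hx
      obtain ⟨j, hj1, hj2, rfl⟩ := hy
      exact cc.Nt_mul_N i hi1 hi2 j hj1 hj2
    | zero => simp
    | add a b _ _ ha hb =>
      rw [Matrix.mul_add]; exact Submodule.add_mem _ ha hb
    | smul c a _ ha =>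
      rw [Matrix.mul_smul]; exact Submodule.smul_mem _ c ha
  | zero => intro M2 _; simp
  | add a b _ _ ha hb =>
    intro M2 h2
    rw [Matrix.transpose_add, Matrix.add_mul]
    exact Submodule.add_mem _ (ha M2 h2) (hb M2 h2)
  | smul c a _ ha =>
    intro M2 h2
    rw [Matrix.transpose_smul, Matrix.smul_mul]
    exact Submodule.smul_mem _ c (ha M2 h2)

lemma bcc_memX (cc : BipartiteCC β γ) :
    ∀ M1 ∈ Submodule.span ℝ {M : Matrix β γ ℝ | ∃ h, 1 ≤ h ∧ h ≤ cc.tbg ∧ M = cc.N h},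
    ∀ M2 ∈ Submodule.span ℝ {M : Matrix β γ ℝ | ∃ h, 1 ≤ h ∧ h ≤ cc.tbg ∧ M = cc.N h},
      M1 * M2ᵀ ∈ Submodule.span ℝ {M : Matrix β β ℝ | ∃ i, i ≤ cc.tb ∧ M = cc.X i} := by
  intro M1 h1
  induction h1 using Submodule.span_induction with
  | mem x hx =>
    intro M2 h2
    induction h2 using Submodule.span_induction with
    | mem y hy =>
      obtain ⟨i, hi1, hi2, rfl⟩ := hx
      obtain ⟨j, hj1, hj2, rfl⟩ := hy
      exact cc.N_mul_Nt i hi1 hi2 j hj1 hj2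
    | zero => simp
    | add a b _ _ ha hb =>
      rw [Matrix.transpose_add, Matrix.mul_add]; exact Submodule.add_mem _ ha hb
    | smul c a _ ha =>
      rw [Matrix.transpose_smul, Matrix.mul_smul]; exact Submodule.smul_mem _ c ha
  | zero => intro M2 _; simp
  | add a b _ _ ha hb =>
    intro M2 h2
    rw [Matrix.add_mul]
    exact Submodule.add_mem _ (ha M2 h2) (hb M2 h2)
  | smul c a _ ha =>
    intro M2 h2
    rw [Matrix.smul_mul]
    exact Submodule.smul_mem _ c (ha M2 h2)

lemma bcc_span_exists_coeff {δ : Type} [Fintype δ] [DecidableEq δ]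
    (f : ℕ → Matrix δ δ ℝ) (n : ℕ) (Z : Matrix δ δ ℝ)
    (hZ : Z ∈ Submodule.span ℝ {M : Matrix δ δ ℝ | ∃ r, r ≤ n ∧ M = f r}) :
    ∃ c : ℕ → ℝ, Z = ∑ i ∈ Finset.range (n + 1), c i • f i := by
  have hset : {M : Matrix δ δ ℝ | ∃ r, r ≤ n ∧ M = f r}
      = Set.range (fun i : Fin (n + 1) => f i.val) := by
    ext M
    constructor
    · rintro ⟨r0, hr0, rfl⟩; exact ⟨⟨r0, Nat.lt_succ_of_le hr0⟩, rfl⟩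
    · rintro ⟨i, rfl⟩; exact ⟨i.val, Nat.lt_succ_iff.mp i.isLt, rfl⟩
  rw [hset] at hZ
  obtain ⟨c, hc⟩ := (Submodule.mem_span_range_iff_exists_fun ℝ).mp hZ
  refine ⟨fun m => if h : m < n + 1 then c ⟨m, h⟩ else 0, ?_⟩
  rw [← hc, ← Fin.sum_univ_eq_sum_range]
  refine Finset.sum_congr rfl fun i _ => ?_
  beta_reduce
  rw [dif_pos i.isLt]

lemma bcc_tbg_le_tg {β γ : Type} [Fintype β] [DecidableEq β] [Fintype γ] [DecidableEq γ]
    (cc : BipartiteCC β γ) (sb : SecondBasis cc) : cc.tbg - 1 ≤ cc.tg := by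
  by_contra hcon
  push_neg at hcon
  set r : ℕ := cc.tg + 1 with hrdef
  have hr : r ≤ cc.tbg - 1 := hcon
  have hrlt : r < cc.tbg := lt_of_le_of_lt hr (Nat.sub_lt cc.tbg_pos one_pos)
  have hule : ∀ u, u ≤ cc.tg → u ≤ cc.tbg - 1 := fun u hu =>
    le_trans (hu.trans (Nat.le_succ cc.tg)) hr
  have hD : ∀ u, u ≤ cc.tbg - 1 →
      sb.D u ∈ Submodule.span ℝ {M : Matrix β γ ℝ | ∃ h, 1 ≤ h ∧ h ≤ cc.tbg ∧ M = cc.N h} := by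
    intro u hu
    rw [← sb.D_span]
    exact Submodule.subset_span ⟨u, hu, rfl⟩
  set A : ℕ → ℕ → Matrix γ γ ℝ := fun x y => (sb.D x)ᵀ * sb.D y with hA
  have hAsym : ∀ x, x ≤ cc.tbg - 1 → ∀ y, y ≤ cc.tbg - 1 → (A x y)ᵀ = A x y := by
    intro x hx y hy
    rw [hA]
    dsimp only
    rw [Matrix.transpose_mul, Matrix.transpose_transpose]
    exact bcc_commT cc _ (hD y hy) _ (hD x hx)
  have hEx : ∀ x, x ≤ cc.tbg - 1 → ∀ y, y ≤ cc.tbg - 1 → ∀ u, u ≤ cc.tbg - 1 →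
      ∀ w, w ≤ cc.tbg - 1 → A x y * A u w = A x u * A y w := by
    intro x hx y hy u hu w hw
    have h1 : sb.D y * (sb.D u)ᵀ = sb.D u * (sb.D y)ᵀ := bcc_commM cc _ (hD y hy) _ (hD u hu)
    rw [hA]
    dsimp only
    rw [Matrix.mul_assoc, ← Matrix.mul_assoc (sb.D y), h1,
      Matrix.mul_assoc (sb.D u), ← Matrix.mul_assoc (sb.D x)ᵀ, ← Matrix.mul_assoc ((sb.D x)ᵀ * sb.D u)]
  have hA0 : ∀ u, u ≤ cc.tg → ∀ u', u' ≤ cc.tg → u ≠ u' → A u u' = 0 := by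
    intro u hu u' hu' hne
    apply bcc_eq_zero_of_trace
    rw [hAsym u (hule u hu) u' (hule u' hu'),
      hEx u (hule u hu) u' (hule u' hu') u (hule u hu) u' (hule u' hu')]
    have e1 : A u u = sb.R u := (sb.R_eq_DtD u (hule u hu)).symm
    have e2 : A u' u' = sb.R u' := (sb.R_eq_DtD u' (hule u' hu')).symm
    rw [e1, e2, sb.R_mul_R u hu u' hu', if_neg hne, Matrix.trace_zero]
  have hmemR : ∀ x, x ≤ cc.tbg - 1 → ∀ y, y ≤ cc.tbg - 1 →
      A x y ∈ Submodule.span ℝ {M : Matrix γ γ ℝ | ∃ r0, r0 ≤ cc.tg ∧ M = sb.R r0} := by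
    intro x hx y hy
    rw [sb.R_span]
    exact bcc_memY cc _ (hD x hx) _ (hD y hy)
  obtain ⟨ρ, hρ⟩ := bcc_span_exists_coeff sb.R cc.tg (A r r) (hmemR r hr r hr)
  have hArrRu : ∀ u, u ≤ cc.tg → A r r * sb.R u = ρ u • sb.R u := by
    intro u hu
    rw [hρ, Matrix.sum_mul]
    rw [Finset.sum_eq_single_of_mem u (Finset.mem_range.mpr (Nat.lt_succ_of_le hu))]
    · rw [Matrix.smul_mul, sb.R_mul_R u hu u hu, if_pos rfl]
    · intro v hv hvu
      rw [Matrix.smul_mul, sb.R_mul_R v (Nat.lt_succ_iff.mp (Finset.mem_range.mp hv)) u hu,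
        if_neg hvu, smul_zero]
  have key : ∀ u : ℕ, ∃ a : ℝ, u ≤ cc.tg → sb.D r * sb.R u = a • sb.D u := by
    intro u
    by_cases hu : u ≤ cc.tg
    swap
    · exact ⟨0, fun h => absurd h hu⟩
    obtain ⟨c, hc⟩ := bcc_span_exists_coeff sb.R cc.tg (A r u) (hmemR r hr u (hule u hu))
    -- A r u * R u' = 0 for u' ≠ u
    have h6 : ∀ u', u' ≤ cc.tg → u' ≠ u → A r u * sb.R u' = 0 := by
      intro u' hu' hne
      have e1 : sb.R u' = A u' u' := sb.R_eq_DtD u' (hule u' hu')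
      rw [e1, hEx r hr u (hule u hu) u' (hule u' hu') u' (hule u' hu'),
        hA0 u hu u' hu' (Ne.symm hne), Matrix.mul_zero]
    have h7 : A r u = A r u * sb.R u := by
      have hs1 : ∑ v ∈ Finset.range (cc.tg + 1), A r u * sb.R v = A r u := by
        rw [← Matrix.mul_sum, sb.R_sum, Matrix.mul_one]
      have hs2 : ∑ v ∈ Finset.range (cc.tg + 1), A r u * sb.R v = A r u * sb.R u := by
        apply Finset.sum_eq_single_of_mem u (Finset.mem_range.mpr (Nat.lt_succ_of_le hu))
        intro v hv hvu
        exact h6 v (Nat.lt_succ_iff.mp (Finset.mem_range.mp hv)) hvu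
      exact hs1.symm.trans hs2
    have h8 : A r u = c u • sb.R u := by
      calc A r u = A r u * sb.R u := h7
        _ = (∑ i ∈ Finset.range (cc.tg + 1), c i • sb.R i) * sb.R u := by rw [← hc]
        _ = c u • sb.R u := by
            rw [Matrix.sum_mul,
              Finset.sum_eq_single_of_mem u (Finset.mem_range.mpr (Nat.lt_succ_of_le hu))]
            · rw [Matrix.smul_mul, sb.R_mul_R u hu u hu, if_pos rfl]
            · intro v hv hvu
              rw [Matrix.smul_mul, sb.R_mul_R v (Nat.lt_succ_iff.mp (Finset.mem_range.mp hv)) u hu,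
                if_neg hvu, smul_zero]
    have hRu0 : sb.R u ≠ 0 := sb.R_indep.ne_zero ⟨u, Nat.lt_succ_of_le hu⟩
    have h11 : c u * c u = ρ u := by
      have h10 : A r u * A r u = A r r * A u u :=
        hEx r hr u (hule u hu) r hr u (hule u hu)
      have e1 : A r u * A r u = (c u * c u) • sb.R u := by
        rw [h8, Matrix.smul_mul, Matrix.mul_smul, sb.R_mul_R u hu u hu, if_pos rfl, smul_smul]
      have e2 : A r r * A u u = ρ u • sb.R u := by
        have e0 : A u u = sb.R u := (sb.R_eq_DtD u (hule u hu)).symm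
        rw [e0]
        exact hArrRu u hu
      have e3 : (c u * c u) • sb.R u = ρ u • sb.R u := by rw [← e1, ← e2, h10]
      have e4 : (c u * c u - ρ u) • sb.R u = 0 := by rw [sub_smul, e3, sub_self]
      rcases smul_eq_zero.mp e4 with h | h
      · linarith [sub_eq_zero.mp (by linarith [h] : c u * c u - ρ u = 0)]
      · exact absurd h hRu0
    have hsymRu : (sb.R u)ᵀ = sb.R u := by
      rw [sb.R_eq_DtD u (hule u hu), Matrix.transpose_mul, Matrix.transpose_transpose]
    set E : Matrix β γ ℝ := c u • sb.D u - sb.D r * sb.R u with hEdef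
    have hAur : A u r = c u • sb.R u := by
      have t : A u r = (A r u)ᵀ := by
        show (sb.D u)ᵀ * sb.D r = ((sb.D r)ᵀ * sb.D u)ᵀ
        rw [Matrix.transpose_mul, Matrix.transpose_transpose]
      rw [t, h8, Matrix.transpose_smul, hsymRu]
    have hDuE : (sb.D u)ᵀ * E = 0 := by
      rw [hEdef, Matrix.mul_sub, Matrix.mul_smul, ← Matrix.mul_assoc]
      have : (sb.D u)ᵀ * sb.D r = A u r := rfl
      rw [this, hAur, ← sb.R_eq_DtD u (hule u hu), Matrix.smul_mul,
        sb.R_mul_R u hu u hu, if_pos rfl, sub_self]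
    have hDrE : (sb.D r)ᵀ * E = 0 := by
      rw [hEdef, Matrix.mul_sub, Matrix.mul_smul, ← Matrix.mul_assoc]
      have e5 : (sb.D r)ᵀ * sb.D u = A r u := rfl
      have e6 : (sb.D r)ᵀ * sb.D r = A r r := rfl
      rw [e5, e6, h8, hArrRu u hu, smul_smul, h11, sub_self]
    have hEt : Eᵀ = c u • (sb.D u)ᵀ - sb.R u * (sb.D r)ᵀ := by
      rw [hEdef, Matrix.transpose_sub, Matrix.transpose_smul, Matrix.transpose_mul, hsymRu]
    have hEtE : Eᵀ * E = 0 := by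
      rw [hEt, Matrix.sub_mul, Matrix.smul_mul, hDuE, Matrix.mul_assoc, hDrE,
        Matrix.mul_zero, smul_zero, sub_self]
    have hE0 : E = 0 := by
      have := bcc_eq_zero_of_trace Eᵀ (by rw [Matrix.transpose_transpose, hEtE, Matrix.trace_zero])
      simpa using congrArg Matrix.transpose this
    exact ⟨c u, fun _ => (sub_eq_zero.mp hE0).symm⟩
  choose a ha using key
  have hDr_sum : sb.D r = ∑ u ∈ Finset.range (cc.tg + 1), a u • sb.D u := by
    have h1 : sb.D r = ∑ u ∈ Finset.range (cc.tg + 1), sb.D r * sb.R u := by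
      rw [← Matrix.mul_sum, sb.R_sum, Matrix.mul_one]
    rw [h1]
    exact Finset.sum_congr rfl fun u hu =>
      ha u (Nat.lt_succ_iff.mp (Finset.mem_range.mp hu))
  have hnot := sb.D_indep.notMem_span_image
    (s := {j : Fin cc.tbg | (j : ℕ) < cc.tg + 1}) (x := ⟨r, hrlt⟩)
    (by simp only [Set.mem_setOf_eq]; omega)
  apply hnot
  show sb.D r ∈ _
  rw [hDr_sum]
  apply Submodule.sum_mem
  intro u hu
  have hu' : u < cc.tg + 1 := Finset.mem_range.mp hu
  have hult : u < cc.tbg := lt_trans (lt_of_lt_of_le hu' (le_refl _)) (by omega)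
  apply Submodule.smul_mem
  apply Submodule.subset_span
  exact ⟨⟨u, hult⟩, hu', rfl⟩

lemma bcc_tbg_le_tb {β γ : Type} [Fintype β] [DecidableEq β] [Fintype γ] [DecidableEq γ]
    (cc : BipartiteCC β γ) (sb : SecondBasis cc) : cc.tbg - 1 ≤ cc.tb := by
  by_contra hcon
  push_neg at hcon
  set r : ℕ := cc.tb + 1 with hrdef
  have hr : r ≤ cc.tbg - 1 := hcon
  have hrlt : r < cc.tbg := lt_of_le_of_lt hr (Nat.sub_lt cc.tbg_pos one_pos)
  have hule : ∀ u, u ≤ cc.tb → u ≤ cc.tbg - 1 := fun u hu =>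
    le_trans (hu.trans (Nat.le_succ cc.tb)) hr
  have hD : ∀ u, u ≤ cc.tbg - 1 →
      sb.D u ∈ Submodule.span ℝ {M : Matrix β γ ℝ | ∃ h, 1 ≤ h ∧ h ≤ cc.tbg ∧ M = cc.N h} := by
    intro u hu
    rw [← sb.D_span]
    exact Submodule.subset_span ⟨u, hu, rfl⟩
  set B : ℕ → ℕ → Matrix β β ℝ := fun x y => sb.D x * (sb.D y)ᵀ with hB
  have hBsym : ∀ x, x ≤ cc.tbg - 1 → ∀ y, y ≤ cc.tbg - 1 → (B x y)ᵀ = B x y := by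
    intro x hx y hy
    show (sb.D x * (sb.D y)ᵀ)ᵀ = sb.D x * (sb.D y)ᵀ
    rw [Matrix.transpose_mul, Matrix.transpose_transpose]
    exact bcc_commM cc _ (hD y hy) _ (hD x hx)
  have hEx : ∀ x, x ≤ cc.tbg - 1 → ∀ y, y ≤ cc.tbg - 1 → ∀ u, u ≤ cc.tbg - 1 →
      ∀ w, w ≤ cc.tbg - 1 → B x y * B u w = B x u * B y w := by
    intro x hx y hy u hu w hw
    have h1 : (sb.D y)ᵀ * sb.D u = (sb.D u)ᵀ * sb.D y := bcc_commT cc _ (hD y hy) _ (hD u hu)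
    show sb.D x * (sb.D y)ᵀ * (sb.D u * (sb.D w)ᵀ) = sb.D x * (sb.D u)ᵀ * (sb.D y * (sb.D w)ᵀ)
    rw [Matrix.mul_assoc, ← Matrix.mul_assoc (sb.D y)ᵀ, h1,
      Matrix.mul_assoc (sb.D u)ᵀ, ← Matrix.mul_assoc (sb.D x), ← Matrix.mul_assoc (sb.D x * (sb.D u)ᵀ)]
  have hB0 : ∀ u, u ≤ cc.tb → ∀ u', u' ≤ cc.tb → u ≠ u' → B u u' = 0 := by
    intro u hu u' hu' hne
    apply bcc_eq_zero_of_trace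
    rw [hBsym u (hule u hu) u' (hule u' hu'),
      hEx u (hule u hu) u' (hule u' hu') u (hule u hu) u' (hule u' hu')]
    have e1 : B u u = sb.L u := (sb.L_eq_DDt u (hule u hu)).symm
    have e2 : B u' u' = sb.L u' := (sb.L_eq_DDt u' (hule u' hu')).symm
    rw [e1, e2, sb.L_mul_L u hu u' hu', if_neg hne, Matrix.trace_zero]
  have hmemL : ∀ x, x ≤ cc.tbg - 1 → ∀ y, y ≤ cc.tbg - 1 →
      B x y ∈ Submodule.span ℝ {M : Matrix β β ℝ | ∃ r0, r0 ≤ cc.tb ∧ M = sb.L r0} := by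
    intro x hx y hy
    rw [sb.L_span]
    exact bcc_memX cc _ (hD x hx) _ (hD y hy)
  obtain ⟨ρ, hρ⟩ := bcc_span_exists_coeff sb.L cc.tb (B r r) (hmemL r hr r hr)
  have hLuBrr : ∀ u, u ≤ cc.tb → sb.L u * B r r = ρ u • sb.L u := by
    intro u hu
    rw [hρ, Matrix.mul_sum]
    rw [Finset.sum_eq_single_of_mem u (Finset.mem_range.mpr (Nat.lt_succ_of_le hu))]
    · rw [Matrix.mul_smul, sb.L_mul_L u hu u hu, if_pos rfl]
    · intro v hv hvu
      rw [Matrix.mul_smul, sb.L_mul_L u hu v (Nat.lt_succ_iff.mp (Finset.mem_range.mp hv)),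
        if_neg (Ne.symm hvu), smul_zero]
  have hBrrLu : ∀ u, u ≤ cc.tb → B r r * sb.L u = ρ u • sb.L u := by
    intro u hu
    rw [hρ, Matrix.sum_mul]
    rw [Finset.sum_eq_single_of_mem u (Finset.mem_range.mpr (Nat.lt_succ_of_le hu))]
    · rw [Matrix.smul_mul, sb.L_mul_L u hu u hu, if_pos rfl]
    · intro v hv hvu
      rw [Matrix.smul_mul, sb.L_mul_L v (Nat.lt_succ_iff.mp (Finset.mem_range.mp hv)) u hu,
        if_neg hvu, smul_zero]
  have key : ∀ u : ℕ, ∃ a : ℝ, u ≤ cc.tb → sb.L u * sb.D r = a • sb.D u := by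
    intro u
    by_cases hu : u ≤ cc.tb
    swap
    · exact ⟨0, fun h => absurd h hu⟩
    obtain ⟨c, hc⟩ := bcc_span_exists_coeff sb.L cc.tb (B r u) (hmemL r hr u (hule u hu))
    have h6 : ∀ u', u' ≤ cc.tb → u' ≠ u → sb.L u' * B r u = 0 := by
      intro u' hu' hne
      have e1 : sb.L u' = B u' u' := sb.L_eq_DDt u' (hule u' hu')
      rw [e1, hEx u' (hule u' hu') u' (hule u' hu') r hr u (hule u hu),
        hB0 u' hu' u hu hne, Matrix.mul_zero]
    have h7 : B r u = sb.L u * B r u := by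
      have hs1 : ∑ v ∈ Finset.range (cc.tb + 1), sb.L v * B r u = B r u := by
        rw [← Matrix.sum_mul, sb.L_sum, Matrix.one_mul]
      have hs2 : ∑ v ∈ Finset.range (cc.tb + 1), sb.L v * B r u = sb.L u * B r u := by
        apply Finset.sum_eq_single_of_mem u (Finset.mem_range.mpr (Nat.lt_succ_of_le hu))
        intro v hv hvu
        exact h6 v (Nat.lt_succ_iff.mp (Finset.mem_range.mp hv)) hvu
      exact hs1.symm.trans hs2
    have h8 : B r u = c u • sb.L u := by
      calc B r u = sb.L u * B r u := h7
        _ = sb.L u * (∑ i ∈ Finset.range (cc.tb + 1), c i • sb.L i) := by rw [← hc]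
        _ = c u • sb.L u := by
            rw [Matrix.mul_sum,
              Finset.sum_eq_single_of_mem u (Finset.mem_range.mpr (Nat.lt_succ_of_le hu))]
            · rw [Matrix.mul_smul, sb.L_mul_L u hu u hu, if_pos rfl]
            · intro v hv hvu
              rw [Matrix.mul_smul, sb.L_mul_L u hu v (Nat.lt_succ_iff.mp (Finset.mem_range.mp hv)),
                if_neg (Ne.symm hvu), smul_zero]
    have hLu0 : sb.L u ≠ 0 := sb.L_indep.ne_zero ⟨u, Nat.lt_succ_of_le hu⟩
    have h11 : c u * c u = ρ u := by
      have h10 : B r u * B r u = B r r * B u u :=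
        hEx r hr u (hule u hu) r hr u (hule u hu)
      have e1 : B r u * B r u = (c u * c u) • sb.L u := by
        rw [h8, Matrix.smul_mul, Matrix.mul_smul, sb.L_mul_L u hu u hu, if_pos rfl, smul_smul]
      have e2 : B r r * B u u = ρ u • sb.L u := by
        have e0 : B u u = sb.L u := (sb.L_eq_DDt u (hule u hu)).symm
        rw [e0]
        exact hBrrLu u hu
      have e3 : (c u * c u) • sb.L u = ρ u • sb.L u := by rw [← e1, ← e2, h10]
      have e4 : (c u * c u - ρ u) • sb.L u = 0 := by rw [sub_smul, e3, sub_self]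
      rcases smul_eq_zero.mp e4 with h | h
      · linarith [sub_eq_zero.mp (by linarith [h] : c u * c u - ρ u = 0)]
      · exact absurd h hLu0
    have hsymLu : (sb.L u)ᵀ = sb.L u := by
      rw [sb.L_eq_DDt u (hule u hu), Matrix.transpose_mul, Matrix.transpose_transpose]
    set E : Matrix β γ ℝ := c u • sb.D u - sb.L u * sb.D r with hEdef
    have hBur : B u r = c u • sb.L u := by
      have t : B u r = (B r u)ᵀ := by
        show sb.D u * (sb.D r)ᵀ = (sb.D r * (sb.D u)ᵀ)ᵀ
        rw [Matrix.transpose_mul, Matrix.transpose_transpose]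
      rw [t, h8, Matrix.transpose_smul, hsymLu]
    have hEDu : E * (sb.D u)ᵀ = 0 := by
      have t1 : sb.D u * (sb.D u)ᵀ = sb.L u := (sb.L_eq_DDt u (hule u hu)).symm
      have t2 : sb.D r * (sb.D u)ᵀ = B r u := rfl
      rw [hEdef, Matrix.sub_mul, Matrix.smul_mul, t1, Matrix.mul_assoc, t2, h8, Matrix.mul_smul,
        sb.L_mul_L u hu u hu, if_pos rfl, sub_self]
    have hEDr : E * (sb.D r)ᵀ = 0 := by
      have t2 : sb.D u * (sb.D r)ᵀ = B u r := rfl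
      have t3 : sb.D r * (sb.D r)ᵀ = B r r := rfl
      rw [hEdef, Matrix.sub_mul, Matrix.smul_mul, t2, hBur, Matrix.mul_assoc, t3,
        hLuBrr u hu, smul_smul, h11, sub_self]
    have hEt : Eᵀ = c u • (sb.D u)ᵀ - (sb.D r)ᵀ * sb.L u := by
      rw [hEdef, Matrix.transpose_sub, Matrix.transpose_smul, Matrix.transpose_mul, hsymLu]
    have hEEt : E * Eᵀ = 0 := by
      rw [hEt, Matrix.mul_sub, Matrix.mul_smul, hEDu, ← Matrix.mul_assoc, hEDr,
        Matrix.zero_mul, smul_zero, sub_self]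
    have hE0 : E = 0 := bcc_eq_zero_of_trace E (by rw [hEEt, Matrix.trace_zero])
    exact ⟨c u, fun _ => (sub_eq_zero.mp hE0).symm⟩
  choose a ha using key
  have hDr_sum : sb.D r = ∑ u ∈ Finset.range (cc.tb + 1), a u • sb.D u := by
    have h1 : sb.D r = ∑ u ∈ Finset.range (cc.tb + 1), sb.L u * sb.D r := by
      rw [← Matrix.sum_mul, sb.L_sum, Matrix.one_mul]
    rw [h1]
    exact Finset.sum_congr rfl fun u hu =>
      ha u (Nat.lt_succ_iff.mp (Finset.mem_range.mp hu))
  have hnot := sb.D_indep.notMem_span_image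
    (s := {j : Fin cc.tbg | (j : ℕ) < cc.tb + 1}) (x := ⟨r, hrlt⟩)
    (by simp only [Set.mem_setOf_eq]; omega)
  apply hnot
  show sb.D r ∈ _
  rw [hDr_sum]
  apply Submodule.sum_mem
  intro u hu
  have hu' : u < cc.tb + 1 := Finset.mem_range.mp hu
  have hult : u < cc.tbg := lt_trans (lt_of_lt_of_le hu' (le_refl _)) (by omega)
  apply Submodule.smul_mem
  apply Submodule.subset_span
  exact ⟨⟨u, hult⟩, hu', rfl⟩

end AuxLemmas

/-- `N i (N j)ᵀ = ∑ᵣ P r i * P r j • L r` and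
`(N i)ᵀ N j = ∑ᵣ P r i * P r j • R r`. -/
theorem bipartiteCC_NNt_expansion (β γ : Type) [Fintype β] [DecidableEq β] [Nonempty β]
    [Fintype γ] [DecidableEq γ] [Nonempty γ] (cc : BipartiteCC β γ) (sb : SecondBasis cc)
    (P : ℕ → ℕ → ℝ)
    (hP : ∀ i, 1 ≤ i → i ≤ cc.tbg →
      cc.N i = ∑ r ∈ Finset.range cc.tbg, P r i • sb.D r) :
    ∀ i, 1 ≤ i → i ≤ cc.tbg → ∀ j, 1 ≤ j → j ≤ cc.tbg →
      cc.N i * (cc.N j)ᵀ = ∑ r ∈ Finset.range cc.tbg, (P r i * P r j) • sb.L r ∧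
      (cc.N i)ᵀ * cc.N j = ∑ r ∈ Finset.range cc.tbg, (P r i * P r j) • sb.R r := by
  intro i hi1 hi2 j hj1 hj2
  have htb : ∀ r, r < cc.tbg → r ≤ cc.tb := fun r hr =>
    le_trans (Nat.le_sub_one_of_lt hr) (bcc_tbg_le_tb cc sb)
  have htg : ∀ r, r < cc.tbg → r ≤ cc.tg := fun r hr =>
    le_trans (Nat.le_sub_one_of_lt hr) (bcc_tbg_le_tg cc sb)
  have hlt : ∀ r, r < cc.tbg → r ≤ cc.tbg - 1 := fun r hr => Nat.le_sub_one_of_lt hr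
  have hDDt : ∀ r, r < cc.tbg → ∀ s, s < cc.tbg → r ≠ s → sb.D r * (sb.D s)ᵀ = 0 := by
    intro r hr s hs hrs
    apply bcc_eq_zero_of_trace
    have e1 : (sb.D r * (sb.D s)ᵀ) * (sb.D r * (sb.D s)ᵀ)ᵀ
        = sb.D r * (((sb.D s)ᵀ * sb.D s) * (sb.D r)ᵀ) := by
      simp [Matrix.mul_assoc]
    rw [e1, Matrix.trace_mul_comm, Matrix.mul_assoc, ← sb.R_eq_DtD s (hlt s hs),
      ← sb.R_eq_DtD r (hlt r hr),
      sb.R_mul_R s (htg s hs) r (htg r hr)]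
    simp [hrs.symm]
  have hDtD : ∀ r, r < cc.tbg → ∀ s, s < cc.tbg → r ≠ s → (sb.D r)ᵀ * sb.D s = 0 := by
    intro r hr s hs hrs
    apply bcc_eq_zero_of_trace
    have e1 : ((sb.D r)ᵀ * sb.D s) * ((sb.D r)ᵀ * sb.D s)ᵀ
        = (sb.D r)ᵀ * ((sb.D s * (sb.D s)ᵀ) * sb.D r) := by
      simp [Matrix.mul_assoc]
    rw [e1, Matrix.trace_mul_comm, Matrix.mul_assoc, ← sb.L_eq_DDt s (hlt s hs),
      ← sb.L_eq_DDt r (hlt r hr),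
      sb.L_mul_L s (htb s hs) r (htb r hr)]
    simp [hrs.symm]
  constructor
  · rw [hP i hi1 hi2, hP j hj1 hj2, Matrix.transpose_sum, Matrix.sum_mul]
    refine Finset.sum_congr rfl ?_
    intro r hr
    rw [Matrix.mul_sum, Finset.sum_eq_single r]
    · rw [Matrix.transpose_smul, Matrix.smul_mul, Matrix.mul_smul,
        ← sb.L_eq_DDt r (hlt r (Finset.mem_range.mp hr)), smul_smul]
    · intro s hs hsr
      rw [Matrix.transpose_smul, Matrix.smul_mul, Matrix.mul_smul,
        hDDt r (Finset.mem_range.mp hr) s (Finset.mem_range.mp hs) (Ne.symm hsr)]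
      simp
    · intro h; exact absurd hr h
  · rw [hP i hi1 hi2, hP j hj1 hj2, Matrix.transpose_sum, Matrix.sum_mul]
    refine Finset.sum_congr rfl ?_
    intro r hr
    rw [Matrix.mul_sum, Finset.sum_eq_single r]
    · rw [Matrix.transpose_smul, Matrix.smul_mul, Matrix.mul_smul,
        ← sb.R_eq_DtD r (hlt r (Finset.mem_range.mp hr)), smul_smul]
    · intro s hs hsr
      rw [Matrix.transpose_smul, Matrix.smul_mul, Matrix.mul_smul,
        hDtD r (Finset.mem_range.mp hr) s (Finset.mem_range.mp hs) (Ne.symm hsr)]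
      simp
    · intro h; exact absurd hr h
end

section
/- Let (β, γ, X_i, Y_j, N_h) be a bipartite coherent configuration equipped with a second basis L_r, R_s, D_h as above, and for 0 ≤ i ≤ t_β and 1 ≤ j ≤ t_{βγ} let ξ_{2i,2j−1}^{2h−1} be the unique reals with X_i N_j = Σ_{h=1}^{t_{βγ}} ξ_{2i,2j−1}^{2h−1} N_h. Then for every 1 ≤ h ≤ t_{βγ}: ξ_{2i,2j−1}^{2h−1} = (1/(|β| k_h^{βγ})) Σ_{r=0}^{t̃_{βγ}} m_r^β P^{βγ}_{r,h} P^β_{r,i} P^{βγ}_{r,j}, where k_h^{βγ} > 0 is the common row sum of N_h. In particular the intersection numbers ξ_{2i,2j−1}^{2h−1} are determined by the eigenmatrices P^β and P^{βγ}. -/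
open Matrix

section Helpers

variable {β γ : Type} [Fintype β] [DecidableEq β] [Fintype γ] [DecidableEq γ]

omit [DecidableEq β] [DecidableEq γ] in
lemma trace_AAt_nonneg (A : Matrix β γ ℝ) : 0 ≤ Matrix.trace (A * Aᵀ) := by
  have : Matrix.trace (A * Aᵀ) = ∑ u : β, ∑ v : γ, A u v * A u v := by
    simp [Matrix.trace, Matrix.mul_apply, Matrix.diag]
  rw [this]
  exact Finset.sum_nonneg fun u _ => Finset.sum_nonneg fun v _ => mul_self_nonneg _

omit [DecidableEq β] [DecidableEq γ] in
lemma eq_zero_of_trace_AAt (A : Matrix β γ ℝ) (h : Matrix.trace (A * Aᵀ) = 0) : A = 0 := by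
  have hsum : ∑ u : β, ∑ v : γ, A u v * A u v = 0 := by
    rw [← h]; simp [Matrix.trace, Matrix.mul_apply, Matrix.diag]
  ext u v
  have h1 : ∀ u ∈ (Finset.univ : Finset β), (0:ℝ) ≤ ∑ v : γ, A u v * A u v :=
    fun u _ => Finset.sum_nonneg fun v _ => mul_self_nonneg _
  have h2 := (Finset.sum_eq_zero_iff_of_nonneg h1).mp hsum u (Finset.mem_univ u)
  have h3 := (Finset.sum_eq_zero_iff_of_nonneg
    (fun v _ => mul_self_nonneg (A u v))).mp h2 v (Finset.mem_univ v)
  simpa using mul_self_eq_zero.mp h3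

omit [DecidableEq β] [DecidableEq γ] in
lemma trace_AAt_pos {A : Matrix β γ ℝ} (h : A ≠ 0) : 0 < Matrix.trace (A * Aᵀ) :=
  lt_of_le_of_ne (trace_AAt_nonneg A) (fun h0 => h (eq_zero_of_trace_AAt A h0.symm))

lemma span_seq_rep {α : Type*} [AddCommGroup α] [Module ℝ α] {f : ℕ → α} {n : ℕ} {A : α}
    (hA : A ∈ Submodule.span ℝ {M | ∃ r, r ≤ n ∧ M = f r}) :
    ∃ c : ℕ → ℝ, A = ∑ r ∈ Finset.range (n+1), c r • f r := by
  have hset : {M | ∃ r, r ≤ n ∧ M = f r} = Set.range (fun r : Fin (n+1) => f r) := by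
    ext M
    constructor
    · rintro ⟨r, hr, rfl⟩; exact ⟨⟨r, Nat.lt_succ_of_le hr⟩, rfl⟩
    · rintro ⟨r, rfl⟩; exact ⟨r, Nat.lt_succ_iff.mp r.isLt, rfl⟩
  rw [hset] at hA
  obtain ⟨c, hc⟩ := (Submodule.mem_span_range_iff_exists_fun _).mp hA
  refine ⟨fun r => if h : r < n+1 then c ⟨r, h⟩ else 0, ?_⟩
  rw [← hc, Finset.sum_range (fun r => _)]
  apply Finset.sum_congr rfl
  intro i _
  simp [i.isLt]

end Helpers

section CC

variable {β γ : Type} [Fintype β] [DecidableEq β] [Fintype γ] [DecidableEq γ]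
variable (cc : BipartiteCC β γ) (sb : SecondBasis cc)

/-- span of the X's -/
def spanX : Submodule ℝ (Matrix β β ℝ) :=
  Submodule.span ℝ {M | ∃ i, i ≤ cc.tb ∧ M = cc.X i}

/-- span of the Y's -/
def spanY : Submodule ℝ (Matrix γ γ ℝ) :=
  Submodule.span ℝ {M | ∃ j, j ≤ cc.tg ∧ M = cc.Y j}

/-- span of the N's -/
def VN : Submodule ℝ (Matrix β γ ℝ) :=
  Submodule.span ℝ {M | ∃ h, 1 ≤ h ∧ h ≤ cc.tbg ∧ M = cc.N h}

lemma lem_L_mem {r : ℕ} (hr : r ≤ cc.tb) : sb.L r ∈ spanX cc := by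
  have : sb.L r ∈ Submodule.span ℝ {M | ∃ r', r' ≤ cc.tb ∧ M = sb.L r'} :=
    Submodule.subset_span ⟨r, hr, rfl⟩
  rw [sb.L_span] at this
  exact this

lemma lem_R_mem {s : ℕ} (hs : s ≤ cc.tg) : sb.R s ∈ spanY cc := by
  have : sb.R s ∈ Submodule.span ℝ {M | ∃ s', s' ≤ cc.tg ∧ M = sb.R s'} :=
    Submodule.subset_span ⟨s, hs, rfl⟩
  rw [sb.R_span] at this
  exact this

lemma lem_spanX_symm {A : Matrix β β ℝ} (hA : A ∈ spanX cc) : Aᵀ = A := by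
  rw [spanX, cc.X_span] at hA
  induction hA using Submodule.span_induction with
  | mem x hx =>
      rcases hx with rfl | ⟨i, hi1, hi2, j, hj1, hj2, rfl⟩
      · exact transpose_one
      · rw [transpose_mul, transpose_transpose]
        exact cc.N_comm j hj1 hj2 i hi1 hi2
  | zero => simp
  | add x y hx hy ihx ihy => rw [transpose_add, ihx, ihy]
  | smul a x hx ihx => rw [transpose_smul, ihx]

lemma lem_spanY_symm {B : Matrix γ γ ℝ} (hB : B ∈ spanY cc) : Bᵀ = B := by
  rw [spanY, cc.Y_span] at hB
  induction hB using Submodule.span_induction with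
  | mem x hx =>
      rcases hx with rfl | ⟨i, hi1, hi2, j, hj1, hj2, rfl⟩
      · exact transpose_one
      · rw [transpose_mul, transpose_transpose]
        exact cc.Nt_comm j hj1 hj2 i hi1 hi2
  | zero => simp
  | add x y hx hy ihx ihy => rw [transpose_add, ihx, ihy]
  | smul a x hx ihx => rw [transpose_smul, ihx]

lemma lem_XiV {i : ℕ} (hi : i ≤ cc.tb) {M : Matrix β γ ℝ} (hM : M ∈ VN cc) :
    cc.X i * M ∈ VN cc := by
  induction hM using Submodule.span_induction with
  | mem x hx => obtain ⟨h, h1, h2, rfl⟩ := hx; exact cc.X_mul_N i hi h h1 h2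
  | zero => rw [Matrix.mul_zero]; exact Submodule.zero_mem _
  | add x y hx hy ihx ihy => rw [Matrix.mul_add]; exact Submodule.add_mem _ ihx ihy
  | smul a x hx ihx => rw [Matrix.mul_smul]; exact Submodule.smul_mem _ _ ihx

lemma lem_XV {A : Matrix β β ℝ} (hA : A ∈ spanX cc) {M : Matrix β γ ℝ} (hM : M ∈ VN cc) :
    A * M ∈ VN cc := by
  induction hA using Submodule.span_induction with
  | mem x hx => obtain ⟨i, hi, rfl⟩ := hx; exact lem_XiV cc hi hM
  | zero => rw [Matrix.zero_mul]; exact Submodule.zero_mem _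
  | add x y hx hy ihx ihy => rw [Matrix.add_mul]; exact Submodule.add_mem _ ihx ihy
  | smul a x hx ihx => rw [Matrix.smul_mul]; exact Submodule.smul_mem _ _ ihx

lemma lem_VYj {j : ℕ} (hj : j ≤ cc.tg) {M : Matrix β γ ℝ} (hM : M ∈ VN cc) :
    M * cc.Y j ∈ VN cc := by
  induction hM using Submodule.span_induction with
  | mem x hx => obtain ⟨h, h1, h2, rfl⟩ := hx; exact cc.N_mul_Y h h1 h2 j hj
  | zero => rw [Matrix.zero_mul]; exact Submodule.zero_mem _
  | add x y hx hy ihx ihy => rw [Matrix.add_mul]; exact Submodule.add_mem _ ihx ihy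
  | smul a x hx ihx => rw [Matrix.smul_mul]; exact Submodule.smul_mem _ _ ihx

lemma lem_VY {M : Matrix β γ ℝ} (hM : M ∈ VN cc) {B : Matrix γ γ ℝ} (hB : B ∈ spanY cc) :
    M * B ∈ VN cc := by
  induction hB using Submodule.span_induction with
  | mem x hx => obtain ⟨j, hj, rfl⟩ := hx; exact lem_VYj cc hj hM
  | zero => rw [Matrix.mul_zero]; exact Submodule.zero_mem _
  | add x y hx hy ihx ihy => rw [Matrix.mul_add]; exact Submodule.add_mem _ ihx ihy
  | smul a x hx ihx => rw [Matrix.mul_smul]; exact Submodule.smul_mem _ _ ihx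

lemma lem_VNt {M : Matrix β γ ℝ} (hM : M ∈ VN cc) {h' : ℕ} (h1 : 1 ≤ h') (h2 : h' ≤ cc.tbg) :
    M * (cc.N h')ᵀ ∈ spanX cc := by
  induction hM using Submodule.span_induction with
  | mem x hx => obtain ⟨h, hh1, hh2, rfl⟩ := hx; exact cc.N_mul_Nt h hh1 hh2 h' h1 h2
  | zero => rw [Matrix.zero_mul]; exact Submodule.zero_mem _
  | add x y hx hy ihx ihy => rw [Matrix.add_mul]; exact Submodule.add_mem _ ihx ihy
  | smul a x hx ihx => rw [Matrix.smul_mul]; exact Submodule.smul_mem _ _ ihx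

lemma lem_VVt {M M' : Matrix β γ ℝ} (hM : M ∈ VN cc) (hM' : M' ∈ VN cc) :
    M * M'ᵀ ∈ spanX cc := by
  induction hM' using Submodule.span_induction with
  | mem x hx => obtain ⟨h, h1, h2, rfl⟩ := hx; exact lem_VNt cc hM h1 h2
  | zero => rw [transpose_zero, Matrix.mul_zero]; exact Submodule.zero_mem _
  | add x y hx hy ihx ihy => rw [transpose_add, Matrix.mul_add]; exact Submodule.add_mem _ ihx ihy
  | smul a x hx ihx => rw [transpose_smul, Matrix.mul_smul]; exact Submodule.smul_mem _ _ ihx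

lemma lem_NtV {M' : Matrix β γ ℝ} (hM' : M' ∈ VN cc) {h : ℕ} (h1 : 1 ≤ h) (h2 : h ≤ cc.tbg) :
    (cc.N h)ᵀ * M' ∈ spanY cc := by
  induction hM' using Submodule.span_induction with
  | mem x hx => obtain ⟨h', hh1, hh2, rfl⟩ := hx; exact cc.Nt_mul_N h h1 h2 h' hh1 hh2
  | zero => rw [Matrix.mul_zero]; exact Submodule.zero_mem _
  | add x y hx hy ihx ihy => rw [Matrix.mul_add]; exact Submodule.add_mem _ ihx ihy
  | smul a x hx ihx => rw [Matrix.mul_smul]; exact Submodule.smul_mem _ _ ihx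

lemma lem_VtV {M M' : Matrix β γ ℝ} (hM : M ∈ VN cc) (hM' : M' ∈ VN cc) :
    Mᵀ * M' ∈ spanY cc := by
  induction hM using Submodule.span_induction with
  | mem x hx => obtain ⟨h, h1, h2, rfl⟩ := hx; exact lem_NtV cc hM' h1 h2
  | zero => rw [transpose_zero, Matrix.zero_mul]; exact Submodule.zero_mem _
  | add x y hx hy ihx ihy => rw [transpose_add, Matrix.add_mul]; exact Submodule.add_mem _ ihx ihy
  | smul a x hx ihx => rw [transpose_smul, Matrix.smul_mul]; exact Submodule.smul_mem _ _ ihx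

end CC
section CC2

variable {β γ : Type} [Fintype β] [DecidableEq β] [Fintype γ] [DecidableEq γ]
variable (cc : BipartiteCC β γ) (sb : SecondBasis cc)

lemma lem_L_ne {r : ℕ} (hr : r ≤ cc.tb) : sb.L r ≠ 0 := by
  have := sb.L_indep.ne_zero ⟨r, Nat.lt_succ_of_le hr⟩
  simpa using this

lemma lem_Lsymm {r : ℕ} (hr : r ≤ cc.tb) : (sb.L r)ᵀ = sb.L r :=
  lem_spanX_symm cc (lem_L_mem cc sb hr)

lemma lem_Rsymm {s : ℕ} (hs : s ≤ cc.tg) : (sb.R s)ᵀ = sb.R s :=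
  lem_spanY_symm cc (lem_R_mem cc sb hs)

lemma lem_trL_pos {r : ℕ} (hr : r ≤ cc.tb) : 0 < Matrix.trace (sb.L r) := by
  have h1 : sb.L r * sb.L r = sb.L r := by
    have := sb.L_mul_L r hr r hr; simpa using this
  have h2 : Matrix.trace (sb.L r) = Matrix.trace (sb.L r * (sb.L r)ᵀ) := by
    rw [lem_Lsymm cc sb hr, h1]
  rw [h2]
  exact trace_AAt_pos (lem_L_ne cc sb hr)

lemma lem_trR_pos {s : ℕ} (hs : s ≤ cc.tg) : 0 < Matrix.trace (sb.R s) := by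
  have hne : sb.R s ≠ 0 := by
    have := sb.R_indep.ne_zero ⟨s, Nat.lt_succ_of_le hs⟩
    simpa using this
  have h1 : sb.R s * sb.R s = sb.R s := by
    have := sb.R_mul_R s hs s hs; simpa using this
  have h2 : Matrix.trace (sb.R s) = Matrix.trace (sb.R s * (sb.R s)ᵀ) := by
    rw [lem_Rsymm cc sb hs, h1]
  rw [h2]
  exact trace_AAt_pos hne

lemma lem_Xrep {A : Matrix β β ℝ} (hA : A ∈ spanX cc) :
    ∃ c : ℕ → ℝ, A = ∑ r ∈ Finset.range (cc.tb + 1), c r • sb.L r := by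
  rw [spanX, ← sb.L_span] at hA
  exact span_seq_rep hA

lemma lem_Yrep {B : Matrix γ γ ℝ} (hB : B ∈ spanY cc) :
    ∃ d : ℕ → ℝ, B = ∑ s ∈ Finset.range (cc.tg + 1), d s • sb.R s := by
  rw [spanY, ← sb.R_span] at hB
  exact span_seq_rep hB

lemma lem_LAL {A : Matrix β β ℝ} (hA : A ∈ spanX cc) {r : ℕ} (hr : r ≤ cc.tb) :
    ∃ a : ℝ, sb.L r * A * sb.L r = a • sb.L r := by
  obtain ⟨c, rfl⟩ := lem_Xrep cc sb hA
  refine ⟨c r, ?_⟩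
  rw [Finset.mul_sum, Finset.sum_mul]
  have : ∀ t ∈ Finset.range (cc.tb + 1),
      sb.L r * (c t • sb.L t) * sb.L r = if r = t then c t • sb.L r else 0 := by
    intro t ht
    rw [Matrix.mul_smul, Matrix.smul_mul, sb.L_mul_L r hr t (Nat.lt_succ_iff.mp (Finset.mem_range.mp ht))]
    by_cases h : r = t
    · rw [if_pos h, if_pos h]
      have := sb.L_mul_L r hr r hr
      rw [if_pos rfl] at this
      rw [this]
    · rw [if_neg h, if_neg h, Matrix.zero_mul, smul_zero]
  rw [Finset.sum_congr rfl this, Finset.sum_ite_eq]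
  rw [if_pos (Finset.mem_range.mpr (Nat.lt_succ_of_le hr))]

lemma lem_RBR {B : Matrix γ γ ℝ} (hB : B ∈ spanY cc) {s : ℕ} (hs : s ≤ cc.tg) :
    ∃ b : ℝ, sb.R s * B * sb.R s = b • sb.R s := by
  obtain ⟨d, rfl⟩ := lem_Yrep cc sb hB
  refine ⟨d s, ?_⟩
  rw [Finset.mul_sum, Finset.sum_mul]
  have : ∀ t ∈ Finset.range (cc.tg + 1),
      sb.R s * (d t • sb.R t) * sb.R s = if s = t then d t • sb.R s else 0 := by
    intro t ht
    rw [Matrix.mul_smul, Matrix.smul_mul, sb.R_mul_R s hs t (Nat.lt_succ_iff.mp (Finset.mem_range.mp ht))]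
    by_cases h : s = t
    · rw [if_pos h, if_pos h]
      have := sb.R_mul_R s hs s hs
      rw [if_pos rfl] at this
      rw [this]
    · rw [if_neg h, if_neg h, Matrix.zero_mul, smul_zero]
  rw [Finset.sum_congr rfl this, Finset.sum_ite_eq]
  rw [if_pos (Finset.mem_range.mpr (Nat.lt_succ_of_le hs))]

lemma lem_RBR' {B : Matrix γ γ ℝ} (hB : B ∈ spanY cc) {s s' : ℕ} (hs : s ≤ cc.tg)
    (hs' : s' ≤ cc.tg) (hne : s ≠ s') : sb.R s * B * sb.R s' = 0 := by
  obtain ⟨d, rfl⟩ := lem_Yrep cc sb hB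
  rw [Finset.mul_sum, Finset.sum_mul]
  apply Finset.sum_eq_zero
  intro t ht
  rw [Matrix.mul_smul, Matrix.smul_mul, sb.R_mul_R s hs t (Nat.lt_succ_iff.mp (Finset.mem_range.mp ht))]
  by_cases h : s = t
  · subst h
    rw [if_pos rfl, sb.R_mul_R s hs s' hs', if_neg hne, smul_zero]
  · rw [if_neg h, Matrix.zero_mul, smul_zero]

lemma lem_MMt {M : Matrix β γ ℝ} (hM : M ∈ VN cc) {r : ℕ} (hr : r ≤ cc.tb)
    (hfix : sb.L r * M = M) (hM0 : M ≠ 0) :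
    ∃ a : ℝ, 0 < a ∧ M * Mᵀ = a • sb.L r := by
  obtain ⟨a, ha⟩ := lem_LAL cc sb (lem_VVt cc hM hM) hr
  have hAA : sb.L r * (M * Mᵀ) * sb.L r = M * Mᵀ := by
    conv_rhs => rw [← hfix]
    rw [transpose_mul, lem_Lsymm cc sb hr]
    rw [Matrix.mul_assoc, Matrix.mul_assoc, Matrix.mul_assoc]
  rw [hAA] at ha
  have htr : Matrix.trace (M * Mᵀ) = a * Matrix.trace (sb.L r) := by
    rw [ha, trace_smul, smul_eq_mul]
  have hpos := trace_AAt_pos hM0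
  rw [htr] at hpos
  have hLtr := lem_trL_pos cc sb hr
  have hapos : 0 < a := by nlinarith
  exact ⟨a, hapos, ha⟩

lemma lem_RMt {M : Matrix β γ ℝ} {s : ℕ} (hs : s ≤ cc.tg) (h2 : M * sb.R s = M) :
    sb.R s * Mᵀ = Mᵀ := by
  conv_lhs => rw [← lem_Rsymm cc sb hs]
  rw [← transpose_mul, h2]

lemma lem_K1 {r s : ℕ} (hr : r ≤ cc.tb) (hs : s ≤ cc.tg) {M M' : Matrix β γ ℝ}
    (hM : M ∈ VN cc) (hM' : M' ∈ VN cc)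
    (h1 : sb.L r * M = M) (h2 : M * sb.R s = M)
    (h1' : sb.L r * M' = M') (h2' : M' * sb.R s = M')
    (hM0 : M ≠ 0) : ∃ c : ℝ, M' = c • M := by
  obtain ⟨a, hapos, hMMt⟩ := lem_MMt cc sb hM hr h1 hM0
  have hRMt := lem_RMt cc sb hs h2
  -- B1 = Mᵀ M
  have hB1fix : sb.R s * (Mᵀ * M) * sb.R s = Mᵀ * M := by
    rw [← Matrix.mul_assoc, hRMt, Matrix.mul_assoc, h2]
  obtain ⟨a', hB1⟩ := lem_RBR cc sb (lem_VtV cc hM hM) hs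
  rw [hB1fix] at hB1
  have ha'pos : 0 < a' := by
    have htr : Matrix.trace (Mᵀ * M) = a' * Matrix.trace (sb.R s) := by
      rw [hB1, trace_smul, smul_eq_mul]
    have h3 : Matrix.trace (Mᵀ * M) = Matrix.trace (M * Mᵀ) := trace_mul_comm _ _
    have hpos := trace_AAt_pos hM0
    rw [← h3, htr] at hpos
    have hRtr := lem_trR_pos cc sb hs
    nlinarith
  -- B2 = Mᵀ M'
  have hB2fix : sb.R s * (Mᵀ * M') * sb.R s = Mᵀ * M' := by
    rw [← Matrix.mul_assoc, hRMt, Matrix.mul_assoc, h2']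
  obtain ⟨f, hB2⟩ := lem_RBR cc sb (lem_VtV cc hM hM') hs
  rw [hB2fix] at hB2
  refine ⟨f / a', ?_⟩
  have hperp : Mᵀ * (M' - (f / a') • M) = 0 := by
    rw [Matrix.mul_sub, Matrix.mul_smul, hB2, hB1, smul_smul,
      div_mul_cancel₀ f (ne_of_gt ha'pos), sub_self]
  have hz : M * Mᵀ * (M' - (f / a') • M) = 0 := by
    rw [Matrix.mul_assoc, hperp, Matrix.mul_zero]
  rw [hMMt, Matrix.smul_mul] at hz
  have hfix' : sb.L r * (M' - (f / a') • M) = M' - (f / a') • M := by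
    rw [Matrix.mul_sub, Matrix.mul_smul, h1', h1]
  rw [hfix'] at hz
  exact sub_eq_zero.mp ((smul_eq_zero.mp hz).resolve_left (ne_of_gt hapos))

lemma lem_K2 {r s s' : ℕ} (hr : r ≤ cc.tb) (hs : s ≤ cc.tg) (hs' : s' ≤ cc.tg)
    (hne : s ≠ s') {M M' : Matrix β γ ℝ}
    (hM : M ∈ VN cc) (hM' : M' ∈ VN cc)
    (h1 : sb.L r * M = M) (h2 : M * sb.R s = M)
    (h1' : sb.L r * M' = M') (h2' : M' * sb.R s' = M')
    (hM0 : M ≠ 0) : M' = 0 := by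
  obtain ⟨a, hapos, hMMt⟩ := lem_MMt cc sb hM hr h1 hM0
  have hRMt := lem_RMt cc sb hs h2
  have hBfix : sb.R s * (Mᵀ * M') * sb.R s' = Mᵀ * M' := by
    rw [← Matrix.mul_assoc, hRMt, Matrix.mul_assoc, h2']
  have hB0 : Mᵀ * M' = 0 := by
    rw [← hBfix, lem_RBR' cc sb (lem_VtV cc hM hM') hs hs' hne]
  have hz : M * Mᵀ * M' = 0 := by
    rw [Matrix.mul_assoc, hB0, Matrix.mul_zero]
  rw [hMMt, Matrix.smul_mul, h1'] at hz
  exact (smul_eq_zero.mp hz).resolve_left (ne_of_gt hapos)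

end CC2
section CC3

variable {β γ : Type} [Fintype β] [DecidableEq β] [Fintype γ] [DecidableEq γ]
variable (cc : BipartiteCC β γ)

lemma lem_cell_mem (sb : SecondBasis cc) {r t : ℕ} (hr : r ≤ cc.tb) (ht : t ≤ cc.tg) {M : Matrix β γ ℝ}
    (hM : M ∈ VN cc) : sb.L r * M * sb.R t ∈ VN cc :=
  lem_VY cc (lem_XV cc (lem_L_mem cc sb hr) hM) (lem_R_mem cc sb ht)

lemma lem_cell_Lfix (sb : SecondBasis cc) {r t : ℕ} (hr : r ≤ cc.tb) (M : Matrix β γ ℝ) :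
    sb.L r * (sb.L r * M * sb.R t) = sb.L r * M * sb.R t := by
  have hLL : sb.L r * sb.L r = sb.L r := by have := sb.L_mul_L r hr r hr; simpa using this
  rw [← Matrix.mul_assoc, ← Matrix.mul_assoc, hLL]

lemma lem_cell_Rfix (sb : SecondBasis cc) {r t : ℕ} (ht : t ≤ cc.tg) (M : Matrix β γ ℝ) :
    (sb.L r * M * sb.R t) * sb.R t = sb.L r * M * sb.R t := by
  have hRR : sb.R t * sb.R t = sb.R t := by have := sb.R_mul_R t ht t ht; simpa using this
  rw [Matrix.mul_assoc (sb.L r * M), hRR]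

lemma lem_tbg_le (sb : SecondBasis cc) : cc.tbg ≤ cc.tb + 1 := by
  classical
  set g : ℕ → Matrix β γ ℝ := fun r =>
    if h : ∃ p : Matrix β γ ℝ, p ≠ 0 ∧ ∃ M ∈ VN cc, ∃ t ≤ cc.tg, p = sb.L r * M * sb.R t
    then h.choose else 0 with hg_def
  have hg : ∀ r, r ≤ cc.tb → ∀ M ∈ VN cc, ∀ t, t ≤ cc.tg →
      ∃ c : ℝ, sb.L r * M * sb.R t = c • g r := by
    intro r hr M hM t ht
    by_cases h0 : sb.L r * M * sb.R t = 0
    · exact ⟨0, by rw [h0, zero_smul]⟩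
    · have hex : ∃ p : Matrix β γ ℝ, p ≠ 0 ∧ ∃ M ∈ VN cc, ∃ t ≤ cc.tg,
          p = sb.L r * M * sb.R t := ⟨_, h0, M, hM, t, ht, rfl⟩
      have hgr : g r = hex.choose := by rw [hg_def]; exact dif_pos hex
      obtain ⟨hp0, M₀, hM₀, t₀, ht₀, hpeq⟩ := hex.choose_spec
      rw [← hgr] at hp0 hpeq
      have hmem : g r ∈ VN cc := by rw [hpeq]; exact lem_cell_mem cc sb hr ht₀ hM₀
      have hLfix : sb.L r * g r = g r := by
        conv_lhs => rw [hpeq]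
        rw [lem_cell_Lfix cc sb hr M₀, ← hpeq]
      have hRfix : g r * sb.R t₀ = g r := by
        conv_lhs => rw [hpeq]
        rw [lem_cell_Rfix cc sb ht₀ M₀, ← hpeq]
      by_cases htt : t = t₀
      · subst htt
        exact lem_K1 cc sb hr ht hmem (lem_cell_mem cc sb hr ht hM)
          hLfix hRfix (lem_cell_Lfix cc sb hr M) (lem_cell_Rfix cc sb ht M) hp0
      · exfalso
        exact h0 (lem_K2 cc sb hr ht₀ ht (fun he => htt he.symm)
          hmem (lem_cell_mem cc sb hr ht hM)
          hLfix hRfix (lem_cell_Lfix cc sb hr M) (lem_cell_Rfix cc sb ht M) hp0)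
  have hspan : VN cc ≤ Submodule.span ℝ (Set.range fun r : Fin (cc.tb + 1) => g r) := by
    intro M hM
    have hexp : (∑ r ∈ Finset.range (cc.tb + 1), sb.L r) * M *
        (∑ t ∈ Finset.range (cc.tg + 1), sb.R t) =
        ∑ r ∈ Finset.range (cc.tb + 1), ∑ t ∈ Finset.range (cc.tg + 1),
          sb.L r * M * sb.R t := by
      rw [Matrix.sum_mul, Matrix.sum_mul]
      exact Finset.sum_congr rfl fun r _ => Matrix.mul_sum _ _ _
    have hMeq : ∑ r ∈ Finset.range (cc.tb + 1), ∑ t ∈ Finset.range (cc.tg + 1),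
        sb.L r * M * sb.R t = M := by
      rw [← hexp, sb.L_sum, sb.R_sum, Matrix.one_mul, Matrix.mul_one]
    rw [← hMeq]
    apply Submodule.sum_mem
    intro r hrmem
    apply Submodule.sum_mem
    intro t htmem
    obtain ⟨c, hc⟩ := hg r (Nat.lt_succ_iff.mp (Finset.mem_range.mp hrmem)) M hM t
      (Nat.lt_succ_iff.mp (Finset.mem_range.mp htmem))
    rw [hc]
    exact Submodule.smul_mem _ _ (Submodule.subset_span
      ⟨⟨r, Finset.mem_range.mp hrmem⟩, rfl⟩)
  have hle1 : Module.finrank ℝ (VN cc) ≤ cc.tb + 1 := by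
    have h2 := finrank_range_le_card (R := ℝ) (fun r : Fin (cc.tb + 1) => g r)
    rw [Fintype.card_fin] at h2
    exact le_trans (Submodule.finrank_mono hspan) h2
  have hge : cc.tbg ≤ Module.finrank ℝ (VN cc) := by
    have hVD : VN cc = Submodule.span ℝ (Set.range fun r : Fin cc.tbg => sb.D r) := by
      rw [VN, ← sb.D_span]
      congr 1
      ext M
      constructor
      · rintro ⟨r, hr, rfl⟩
        exact ⟨⟨r, by have := cc.tbg_pos; omega⟩, rfl⟩
      · rintro ⟨r, rfl⟩
        exact ⟨r, by have := r.isLt; omega, rfl⟩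
    rw [hVD, finrank_span_eq_card sb.D_indep, Fintype.card_fin]
  omega

end CC3
section CC4

variable {β γ : Type} [Fintype β] [DecidableEq β] [Fintype γ] [DecidableEq γ]
variable (cc : BipartiteCC β γ)

lemma lem_LsDs (sb : SecondBasis cc) {s : ℕ} (hs : s ≤ cc.tbg - 1) :
    sb.L s * sb.D s = sb.D s := by
  have hstb : s ≤ cc.tb := by have h1 := lem_tbg_le cc sb; have h2 := cc.tbg_pos; omega
  have hE : sb.D s * (sb.D s)ᵀ = sb.L s := (sb.L_eq_DDt s hs).symm
  have hLL : sb.L s * sb.L s = sb.L s := by have := sb.L_mul_L s hstb s hstb; simpa using this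
  have hsym : (sb.L s)ᵀ = sb.L s := lem_Lsymm cc sb hstb
  have hMMt : (sb.L s * sb.D s - sb.D s) * (sb.L s * sb.D s - sb.D s)ᵀ = 0 := by
    have hMt : (sb.L s * sb.D s - sb.D s)ᵀ = (sb.D s)ᵀ * sb.L s - (sb.D s)ᵀ := by
      rw [transpose_sub, transpose_mul, hsym]
    rw [hMt, Matrix.sub_mul, Matrix.mul_sub, Matrix.mul_sub]
    have e1 : sb.L s * sb.D s * ((sb.D s)ᵀ * sb.L s) = sb.L s := by
      rw [← Matrix.mul_assoc, Matrix.mul_assoc (sb.L s), hE, hLL, hLL]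
    have e2 : sb.L s * sb.D s * (sb.D s)ᵀ = sb.L s := by
      rw [Matrix.mul_assoc, hE, hLL]
    have e3 : sb.D s * ((sb.D s)ᵀ * sb.L s) = sb.L s := by
      rw [← Matrix.mul_assoc, hE, hLL]
    rw [e1, e2, e3, hE]
    simp
  have := eq_zero_of_trace_AAt _ (by rw [hMMt, Matrix.trace_zero])
  exact sub_eq_zero.mp this

lemma lem_LD (sb : SecondBasis cc) {r s : ℕ} (hr : r ≤ cc.tb) (hs : s ≤ cc.tbg - 1) :
    sb.L r * sb.D s = if r = s then sb.D s else 0 := by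
  have hstb : s ≤ cc.tb := by have h1 := lem_tbg_le cc sb; have h2 := cc.tbg_pos; omega
  by_cases h : r = s
  · subst h; rw [if_pos rfl]; exact lem_LsDs cc sb hs
  · rw [if_neg h]
    conv_lhs => rw [← lem_LsDs cc sb hs]
    rw [← Matrix.mul_assoc, sb.L_mul_L r hr s hstb, if_neg h, Matrix.zero_mul]

lemma lem_trDD (sb : SecondBasis cc) {s t : ℕ} (hs : s ≤ cc.tbg - 1) (ht : t ≤ cc.tbg - 1) :
    Matrix.trace (sb.D s * (sb.D t)ᵀ) = if s = t then Matrix.trace (sb.L s) else 0 := by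
  have hstb : s ≤ cc.tb := by have h1 := lem_tbg_le cc sb; have h2 := cc.tbg_pos; omega
  by_cases h : s = t
  · subst h; rw [if_pos rfl, ← sb.L_eq_DDt s hs]
  · rw [if_neg h]
    have h1 : sb.D s * (sb.D t)ᵀ = sb.L s * (sb.D s * (sb.D t)ᵀ) := by
      rw [← Matrix.mul_assoc, lem_LsDs cc sb hs]
    have h3 : sb.L s * sb.D t = 0 := by rw [lem_LD cc sb hstb ht, if_neg h]
    have h2 : (sb.D t)ᵀ * sb.L s = 0 := by
      calc (sb.D t)ᵀ * sb.L s = (sb.D t)ᵀ * (sb.L s)ᵀ := by rw [lem_Lsymm cc sb hstb]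
      _ = (sb.L s * sb.D t)ᵀ := (transpose_mul _ _).symm
      _ = 0 := by rw [h3, transpose_zero]
    rw [h1, Matrix.trace_mul_comm, Matrix.mul_assoc, h2, Matrix.mul_zero, Matrix.trace_zero]

lemma lem_N_sum_entry (u : β) (v : γ) : ∑ h ∈ Finset.Icc 1 cc.tbg, cc.N h u v = 1 := by
  have h0 : (∑ h ∈ Finset.Icc 1 cc.tbg, cc.N h) u v = Matrix.of (fun _ _ => (1:ℝ)) u v := by
    rw [cc.N_sum]
  simpa [Matrix.sum_apply] using h0

lemma lem_N_disj {h h' : ℕ} (hh : 1 ≤ h) (hh2 : h ≤ cc.tbg) (hh' : 1 ≤ h') (hh2' : h' ≤ cc.tbg)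
    (hne : h ≠ h') (u : β) (v : γ) : cc.N h u v * cc.N h' u v = 0 := by
  rcases cc.N_zero_one h hh hh2 u v with h0 | h1
  · rw [h0, zero_mul]
  rcases cc.N_zero_one h' hh' hh2' u v with h0' | h1'
  · rw [h0', mul_zero]
  exfalso
  have hsum := lem_N_sum_entry cc u v
  have hmem : h ∈ Finset.Icc 1 cc.tbg := Finset.mem_Icc.mpr ⟨hh, hh2⟩
  have hmem' : h' ∈ (Finset.Icc 1 cc.tbg).erase h :=
    Finset.mem_erase.mpr ⟨Ne.symm hne, Finset.mem_Icc.mpr ⟨hh', hh2'⟩⟩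
  rw [← Finset.add_sum_erase _ _ hmem] at hsum
  rw [← Finset.add_sum_erase _ _ hmem'] at hsum
  have hnonneg : 0 ≤ ∑ g ∈ ((Finset.Icc 1 cc.tbg).erase h).erase h', cc.N g u v := by
    apply Finset.sum_nonneg
    intro g hg
    have hgIcc : g ∈ Finset.Icc 1 cc.tbg :=
      Finset.mem_of_mem_erase (Finset.mem_of_mem_erase hg)
    rcases cc.N_zero_one g (Finset.mem_Icc.mp hgIcc).1 (Finset.mem_Icc.mp hgIcc).2 u v with
      hz | ho
    · simp [hz]
    · simp [ho]
  rw [h1, h1'] at hsum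
  linarith

end CC4
/-- the intersection numbers `ξ` defined by `X i * N j = ∑ₕ ξ i j h • N h`
are determined by the eigenmatrices via
`ξ i j h = (1/(|β| k h)) ∑ᵣ m r ^ β * P^{βγ} r h * P^β r i * P^{βγ} r j`. -/
theorem bipartiteCC_intersection_numbers_formula (β γ : Type) [Fintype β] [DecidableEq β]
    [Nonempty β] [Fintype γ] [DecidableEq γ] [Nonempty γ]
    (cc : BipartiteCC β γ) (sb : SecondBasis cc)
    (P Pb : ℕ → ℕ → ℝ)
    (hP : ∀ i, 1 ≤ i → i ≤ cc.tbg →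
      cc.N i = ∑ r ∈ Finset.range cc.tbg, P r i • sb.D r)
    (hPb : ∀ i, i ≤ cc.tb →
      cc.X i = ∑ r ∈ Finset.range (cc.tb + 1), Pb r i • sb.L r)
    (k : ℕ → ℝ) (hk_pos : ∀ h, 1 ≤ h → h ≤ cc.tbg → 0 < k h)
    (hk : ∀ h, 1 ≤ h → h ≤ cc.tbg → ∀ u : β, ∑ v : γ, cc.N h u v = k h)
    (ξ : ℕ → ℕ → ℕ → ℝ)
    (hξ : ∀ i, i ≤ cc.tb → ∀ j, 1 ≤ j → j ≤ cc.tbg →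
      cc.X i * cc.N j = ∑ h ∈ Finset.Icc 1 cc.tbg, ξ i j h • cc.N h) :
    ∀ i, i ≤ cc.tb → ∀ j, 1 ≤ j → j ≤ cc.tbg → ∀ h, 1 ≤ h → h ≤ cc.tbg →
      ξ i j h = ((Fintype.card β : ℝ) * k h)⁻¹ *
        ∑ r ∈ Finset.range cc.tbg, Matrix.trace (sb.L r) * P r h * Pb r i * P r j := by
  intro i hi j hj1 hj2 h hh1 hh2
  have htbg := lem_tbg_le cc sb
  have htbgpos := cc.tbg_pos
  -- trace of N b * (N a)ᵀ, combinatorially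
  have hT : ∀ a, 1 ≤ a → a ≤ cc.tbg → ∀ b, 1 ≤ b → b ≤ cc.tbg →
      Matrix.trace (cc.N b * (cc.N a)ᵀ) =
        if a = b then (Fintype.card β : ℝ) * k a else 0 := by
    intro a ha1 ha2 b hb1 hb2
    have hexp : Matrix.trace (cc.N b * (cc.N a)ᵀ) =
        ∑ u : β, ∑ v : γ, cc.N b u v * cc.N a u v := by
      simp [Matrix.trace, Matrix.mul_apply, Matrix.diag]
    by_cases hab : a = b
    · subst hab
      rw [if_pos rfl, hexp]
      have : ∀ u : β, ∑ v : γ, cc.N a u v * cc.N a u v = k a := by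
        intro u
        rw [← hk a ha1 ha2 u]
        apply Finset.sum_congr rfl
        intro v _
        rcases cc.N_zero_one a ha1 ha2 u v with hz | ho
        · rw [hz, mul_zero]
        · rw [ho, mul_one]
      rw [Finset.sum_congr rfl fun u _ => this u, Finset.sum_const, Finset.card_univ,
        nsmul_eq_mul]
    · rw [if_neg hab, hexp]
      apply Finset.sum_eq_zero
      intro u _
      apply Finset.sum_eq_zero
      intro v _
      exact lem_N_disj cc hb1 hb2 ha1 ha2 (fun he => hab he.symm) u v
  -- trace of N b * (N a)ᵀ, spectrally
  have hS : ∀ a, 1 ≤ a → a ≤ cc.tbg → ∀ b, 1 ≤ b → b ≤ cc.tbg →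
      ∑ r ∈ Finset.range cc.tbg, Matrix.trace (sb.L r) * P r a * P r b
      = if a = b then (Fintype.card β : ℝ) * k a else 0 := by
    intro a ha1 ha2 b hb1 hb2
    rw [← hT a ha1 ha2 b hb1 hb2]
    rw [hP b hb1 hb2, hP a ha1 ha2]
    rw [Matrix.transpose_sum, Matrix.sum_mul, Matrix.trace_sum]
    apply Finset.sum_congr rfl
    intro s hsmem
    have hs : s ≤ cc.tbg - 1 := by have := Finset.mem_range.mp hsmem; omega
    rw [Matrix.smul_mul, Matrix.mul_sum, trace_smul]
    have hinner : ∀ t ∈ Finset.range cc.tbg,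
        sb.D s * (P t a • sb.D t)ᵀ = if s = t then P t a • (sb.D s * (sb.D s)ᵀ) else
          P t a • (sb.D s * (sb.D t)ᵀ) := by
      intro t htmem
      rw [transpose_smul, Matrix.mul_smul]
      by_cases hst : s = t
      · rw [if_pos hst, hst]
      · rw [if_neg hst]
    -- compute the trace of the inner sum
    have htr : Matrix.trace (∑ t ∈ Finset.range cc.tbg, sb.D s * (P t a • sb.D t)ᵀ)
        = P s a * Matrix.trace (sb.L s) := by
      rw [Matrix.trace_sum]
      have : ∀ t ∈ Finset.range cc.tbg,
          Matrix.trace (sb.D s * (P t a • sb.D t)ᵀ) =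
            if s = t then P t a * Matrix.trace (sb.L s) else 0 := by
        intro t htmem
        have ht : t ≤ cc.tbg - 1 := by have := Finset.mem_range.mp htmem; omega
        rw [transpose_smul, Matrix.mul_smul, trace_smul, smul_eq_mul,
          lem_trDD cc sb hs ht]
        by_cases hst : s = t
        · rw [if_pos hst, if_pos hst]
        · rw [if_neg hst, if_neg hst, mul_zero]
      rw [Finset.sum_congr rfl this, Finset.sum_ite_eq, if_pos hsmem]
    rw [htr, smul_eq_mul]
    ring
  -- coefficient identity from linear independence of the D's
  have hcoef : ∀ r, r < cc.tbg →
      Pb r i * P r j = ∑ h' ∈ Finset.Icc 1 cc.tbg, ξ i j h' * P r h' := by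
    intro r hrlt
    have hXN : cc.X i * cc.N j =
        ∑ s ∈ Finset.range cc.tbg, (Pb s i * P s j) • sb.D s := by
      rw [hPb i hi, hP j hj1 hj2, Matrix.sum_mul]
      have step1 : ∀ r' ∈ Finset.range (cc.tb + 1),
          (Pb r' i • sb.L r') * (∑ s ∈ Finset.range cc.tbg, P s j • sb.D s)
          = ∑ s ∈ Finset.range cc.tbg, (Pb r' i * P s j) • (sb.L r' * sb.D s) := by
        intro r' _
        rw [Matrix.smul_mul, Matrix.mul_sum, Finset.smul_sum]
        apply Finset.sum_congr rfl
        intro s _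
        rw [Matrix.mul_smul, smul_smul]
      rw [Finset.sum_congr rfl step1, Finset.sum_comm]
      apply Finset.sum_congr rfl
      intro s hsmem
      have hs : s ≤ cc.tbg - 1 := by have := Finset.mem_range.mp hsmem; omega
      have : ∀ r' ∈ Finset.range (cc.tb + 1),
          (Pb r' i * P s j) • (sb.L r' * sb.D s)
          = if r' = s then (Pb r' i * P s j) • sb.D s else 0 := by
        intro r' hr'mem
        rw [lem_LD cc sb (Nat.lt_succ_iff.mp (Finset.mem_range.mp hr'mem)) hs]
        by_cases hrs : r' = s
        · rw [if_pos hrs, if_pos hrs]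
        · rw [if_neg hrs, if_neg hrs, smul_zero]
      rw [Finset.sum_congr rfl this, Finset.sum_ite_eq', if_pos]
      exact Finset.mem_range.mpr (by omega)
    have hXN2 : cc.X i * cc.N j =
        ∑ s ∈ Finset.range cc.tbg,
          (∑ h' ∈ Finset.Icc 1 cc.tbg, ξ i j h' * P s h') • sb.D s := by
      rw [hξ i hi j hj1 hj2]
      have step1 : ∀ h' ∈ Finset.Icc 1 cc.tbg,
          ξ i j h' • cc.N h'
          = ∑ s ∈ Finset.range cc.tbg, (ξ i j h' * P s h') • sb.D s := by
        intro h' hmem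
        obtain ⟨h1', h2'⟩ := Finset.mem_Icc.mp hmem
        rw [hP h' h1' h2', Finset.smul_sum]
        apply Finset.sum_congr rfl
        intro s _
        rw [smul_smul]
      rw [Finset.sum_congr rfl step1, Finset.sum_comm]
      apply Finset.sum_congr rfl
      intro s _
      rw [Finset.sum_smul]
    have heq : ∑ s ∈ Finset.range cc.tbg,
        ((Pb s i * P s j) - ∑ h' ∈ Finset.Icc 1 cc.tbg, ξ i j h' * P s h') • sb.D s = 0 := by
      simp only [sub_smul, Finset.sum_sub_distrib]
      rw [← hXN, ← hXN2, sub_self]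
    rw [Finset.sum_range (fun s =>
      ((Pb s i * P s j) - ∑ h' ∈ Finset.Icc 1 cc.tbg, ξ i j h' * P s h') • sb.D s)] at heq
    have := Fintype.linearIndependent_iff.mp sb.D_indep
      (fun s : Fin cc.tbg =>
        (Pb s.val i * P s.val j) - ∑ h' ∈ Finset.Icc 1 cc.tbg, ξ i j h' * P s.val h')
      heq ⟨r, hrlt⟩
    exact sub_eq_zero.mp this
  -- final computation
  have hkb : (0:ℝ) < (Fintype.card β : ℝ) * k h :=
    mul_pos (by exact_mod_cast Fintype.card_pos) (hk_pos h hh1 hh2)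
  have hmain : ∑ r ∈ Finset.range cc.tbg,
      Matrix.trace (sb.L r) * P r h * Pb r i * P r j
      = ξ i j h * ((Fintype.card β : ℝ) * k h) := by
    have step1 : ∀ r ∈ Finset.range cc.tbg,
        Matrix.trace (sb.L r) * P r h * Pb r i * P r j
        = ∑ h' ∈ Finset.Icc 1 cc.tbg,
            ξ i j h' * (Matrix.trace (sb.L r) * P r h * P r h') := by
      intro r hrmem
      rw [mul_assoc (Matrix.trace (sb.L r) * P r h), hcoef r (Finset.mem_range.mp hrmem),
        Finset.mul_sum]
      apply Finset.sum_congr rfl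
      intro h' _
      ring
    rw [Finset.sum_congr rfl step1, Finset.sum_comm]
    have step2 : ∀ h' ∈ Finset.Icc 1 cc.tbg,
        ∑ r ∈ Finset.range cc.tbg,
          ξ i j h' * (Matrix.trace (sb.L r) * P r h * P r h')
        = if h = h' then ξ i j h' * ((Fintype.card β : ℝ) * k h) else 0 := by
      intro h' hmem
      obtain ⟨h1', h2'⟩ := Finset.mem_Icc.mp hmem
      rw [← Finset.mul_sum, hS h hh1 hh2 h' h1' h2']
      by_cases hhe : h = h'
      · rw [if_pos hhe, if_pos hhe]
      · rw [if_neg hhe, if_neg hhe, mul_zero]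
    rw [Finset.sum_congr rfl step2, Finset.sum_ite_eq, if_pos]
    exact Finset.mem_Icc.mpr ⟨hh1, hh2⟩
  rw [hmain, mul_comm (ξ i j h), ← mul_assoc, inv_mul_cancel₀ (ne_of_gt hkb), one_mul]
end

section
/- Let (β, γ, X_i, Y_j, N_h) be a bipartite coherent configuration equipped with a second basis L_r, R_s, D_h as above, with Krein parameters Δ_{ij}(h) defined by D_i ∘ D_j = (1/√(|β||γ|)) Σ_{h=0}^{t̃_{βγ}} Δ_{ij}(h) D_h. Then for all 0 ≤ i, j, h ≤ t̃_{βγ} with m_h^β ≠ 0: Δ_{ij}(h) = (1/(|γ| m_h^β)) Σ_{ℓ=1}^{t_{βγ}} Q^{βγ}_{ℓ,h} Q^{βγ}_{ℓ,i} Q^{βγ}_{ℓ,j} k_ℓ^{βγ}; moreover this expression is symmetric in the two fibres, i.e., it equals (1/(|β| m_h^γ)) Σ_{ℓ=1}^{t_{βγ}} Q^{βγ}_{ℓ,h} Q^{βγ}_{ℓ,i} Q^{βγ}_{ℓ,j} k_ℓ^{γβ}, where k_ℓ^{γβ} is the common row sum of N_ℓ^T. -/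
open Matrix

/-!
Pair `(D i ⊙ D j)` with `D h` under the trace form `⟨A, B⟩ = tr (A * Bᵀ)`. On the one hand the
`D`'s are orthogonal for this form with `⟨D h, D h⟩ = tr (L h)`, so the expansion defining `Δ`
gives `⟨D i ⊙ D j, D h⟩ = Δ i j h * tr (L h) / √(|β||γ|)`. On the other hand the `N`'s have
disjoint supports, so the Schur product of the expansions of `D i`, `D j`, `D h` in the `N`'s is
`∑ₗ Q l i Q l j Q l h N l / √(|β||γ|)³`, whose entries sum to `|β| ∑ₗ Q l i Q l j Q l h k l`.
Counting the ones of `N l` by columns instead gives the second formula.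

Orthogonality of `D r` and `D s` comes from `L r * L s = 0`, which needs `r, s ≤ tb`, i.e. the
inequality `tbg ≤ tb + 1`: each `L t` maps the span of the `N`'s onto a space of dimension at most
one, and these images add up to the whole span.
-/

namespace Matrix

variable {ι m n : Type*}

lemma eq_zero_of_trace_mul_transpose_self [Fintype m] [Fintype n] {A : Matrix m n ℝ}
    (h : (A * Aᵀ).trace = 0) : A = 0 :=
  trace_mul_conjTranspose_self_eq_zero_iff.mp (by rwa [conjTranspose_eq_transpose_of_trivial])

lemma sum_smul_hadamard_sum_smul [DecidableEq ι] {s : Finset ι} {N : ι → Matrix m n ℝ}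
    (hN : ∀ l ∈ s, ∀ l' ∈ s, N l ⊙ N l' = if l = l' then N l else 0) (a b : ι → ℝ) :
    (∑ l ∈ s, a l • N l) ⊙ (∑ l ∈ s, b l • N l) = ∑ l ∈ s, (a l * b l) • N l := by
  ext u v
  simp only [hadamard_apply, sum_apply, smul_apply, smul_eq_mul, Finset.sum_mul_sum]
  refine Finset.sum_congr rfl fun l hl => ?_
  have hNuv : ∀ l' ∈ s, N l u v * N l' u v = if l = l' then N l u v else 0 := fun l' hl' => by
    simpa [apply_ite (fun M : Matrix m n ℝ => M u v)] using congr_fun₂ (hN l hl l' hl') u v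
  rw [Finset.sum_eq_single_of_mem l hl]
  · rw [mul_mul_mul_comm, hNuv l hl, if_pos rfl]
  · intro l' hl' hne
    rw [mul_mul_mul_comm, hNuv l' hl', if_neg hne.symm, mul_zero]

lemma sum_sum_sum_smul_apply [Fintype m] [Fintype n] (s : Finset ι) (N : ι → Matrix m n ℝ)
    (a : ι → ℝ) :
    ∑ u : m, ∑ v : n, (∑ l ∈ s, a l • N l) u v = ∑ l ∈ s, a l * ∑ u : m, ∑ v : n, N l u v := by
  simp only [sum_apply, smul_apply, smul_eq_mul, Finset.mul_sum]
  exact (Finset.sum_congr rfl fun _ _ => Finset.sum_comm).trans Finset.sum_comm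

lemma sum_mul_sum_sum_eq_card_mul_of_sum_row [Fintype m] [Fintype n] {s : Finset ι}
    {N : ι → Matrix m n ℝ} {k : ι → ℝ} (hk : ∀ l ∈ s, ∀ u, ∑ v, N l u v = k l) (a : ι → ℝ) :
    ∑ l ∈ s, a l * ∑ u, ∑ v, N l u v = Fintype.card m * ∑ l ∈ s, a l * k l := by
  rw [Finset.mul_sum]
  refine Finset.sum_congr rfl fun l hl => ?_
  simp only [hk l hl, Finset.sum_const, Finset.card_univ, nsmul_eq_mul]
  ring

lemma sum_mul_sum_sum_eq_card_mul_of_sum_col [Fintype m] [Fintype n] {s : Finset ι}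
    {N : ι → Matrix m n ℝ} {k : ι → ℝ} (hk : ∀ l ∈ s, ∀ v, ∑ u, N l u v = k l) (a : ι → ℝ) :
    ∑ l ∈ s, a l * ∑ u, ∑ v, N l u v = Fintype.card n * ∑ l ∈ s, a l * k l := by
  rw [← sum_mul_sum_sum_eq_card_mul_of_sum_row (N := fun l => (N l)ᵀ) hk a]
  exact Finset.sum_congr rfl fun l _ => congrArg (a l * ·) Finset.sum_comm

end Matrix

namespace BipartiteCC

variable {β γ : Type} [Fintype β] [DecidableEq β] [Fintype γ] [DecidableEq γ]
  (cc : BipartiteCC β γ)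

def xSpan : Submodule ℝ (Matrix β β ℝ) :=
  Submodule.span ℝ {M | ∃ i, i ≤ cc.tb ∧ M = cc.X i}

def nSpan : Submodule ℝ (Matrix β γ ℝ) :=
  Submodule.span ℝ {M | ∃ h, 1 ≤ h ∧ h ≤ cc.tbg ∧ M = cc.N h}

lemma N_nonneg {l : ℕ} (hl : l ∈ Finset.Icc 1 cc.tbg) (u : β) (v : γ) : 0 ≤ cc.N l u v := by
  rw [Finset.mem_Icc] at hl
  rcases cc.N_zero_one l hl.1 hl.2 u v with h | h <;> simp [h]

lemma N_mul_N_of_ne {l l' : ℕ} (hl : l ∈ Finset.Icc 1 cc.tbg) (hl' : l' ∈ Finset.Icc 1 cc.tbg)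
    (hne : l ≠ l') (u : β) (v : γ) : cc.N l u v * cc.N l' u v = 0 := by
  have hsum : ∑ x ∈ Finset.Icc 1 cc.tbg, cc.N x u v = 1 := by
    simpa [Matrix.sum_apply] using congr_fun₂ cc.N_sum u v
  have hpair : cc.N l u v + cc.N l' u v ≤ 1 := by
    rw [← hsum, ← Finset.sum_pair (f := fun x => cc.N x u v) hne]
    refine Finset.sum_le_sum_of_subset_of_nonneg ?_ fun x hx _ => cc.N_nonneg hx u v
    simp [Finset.insert_subset_iff, hl, hl']
  rw [Finset.mem_Icc] at hl hl'
  rcases cc.N_zero_one l hl.1 hl.2 u v with h | h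
  · simp [h]
  rcases cc.N_zero_one l' hl'.1 hl'.2 u v with h' | h'
  · simp [h']
  · rw [h, h'] at hpair
    norm_num at hpair

lemma N_hadamard_N {l l' : ℕ} (hl : l ∈ Finset.Icc 1 cc.tbg) (hl' : l' ∈ Finset.Icc 1 cc.tbg) :
    cc.N l ⊙ cc.N l' = if l = l' then cc.N l else 0 := by
  split_ifs with hll'
  · subst hll'
    ext u v
    rw [Finset.mem_Icc] at hl
    rcases cc.N_zero_one l hl.1 hl.2 u v with h | h <;> simp [h]
  · ext u v
    exact cc.N_mul_N_of_ne hl hl' hll' u v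

lemma sum_smul_N_hadamard_sum_smul_N (a b : ℕ → ℝ) :
    (∑ l ∈ Finset.Icc 1 cc.tbg, a l • cc.N l) ⊙ (∑ l ∈ Finset.Icc 1 cc.tbg, b l • cc.N l) =
      ∑ l ∈ Finset.Icc 1 cc.tbg, (a l * b l) • cc.N l :=
  Matrix.sum_smul_hadamard_sum_smul (fun _ hl _ hl' => cc.N_hadamard_N hl hl') a b

lemma mul_transpose_mem_xSpan {A B : Matrix β γ ℝ} (hA : A ∈ cc.nSpan) (hB : B ∈ cc.nSpan) :
    A * Bᵀ ∈ cc.xSpan := by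
  induction hA, hB using Submodule.span_induction₂ with
  | mem_mem x y hx hy =>
    obtain ⟨i, hi1, hi2, rfl⟩ := hx
    obtain ⟨j, hj1, hj2, rfl⟩ := hy
    exact cc.N_mul_Nt i hi1 hi2 j hj1 hj2
  | zero_left y hy => simp
  | zero_right x hx => simp
  | add_left x y z _ _ _ h1 h2 => rw [Matrix.add_mul]; exact add_mem h1 h2
  | add_right x y z _ _ _ h1 h2 => rw [Matrix.transpose_add, Matrix.mul_add]; exact add_mem h1 h2
  | smul_left r x y _ _ h => rw [Matrix.smul_mul]; exact Submodule.smul_mem _ _ h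
  | smul_right r x y _ _ h =>
    rw [Matrix.transpose_smul, Matrix.mul_smul]; exact Submodule.smul_mem _ _ h

lemma transpose_mul_comm_of_mem_nSpan {A B : Matrix β γ ℝ} (hA : A ∈ cc.nSpan)
    (hB : B ∈ cc.nSpan) : Aᵀ * B = Bᵀ * A := by
  induction hA, hB using Submodule.span_induction₂ with
  | mem_mem x y hx hy =>
    obtain ⟨i, hi1, hi2, rfl⟩ := hx
    obtain ⟨j, hj1, hj2, rfl⟩ := hy
    exact cc.Nt_comm i hi1 hi2 j hj1 hj2
  | zero_left y hy => simp
  | zero_right x hx => simp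
  | add_left x y z _ _ _ h1 h2 =>
    simp only [Matrix.transpose_add, Matrix.add_mul, Matrix.mul_add, h1, h2]
  | add_right x y z _ _ _ h1 h2 =>
    simp only [Matrix.transpose_add, Matrix.add_mul, Matrix.mul_add, h1, h2]
  | smul_left r x y _ _ h =>
    simp only [Matrix.transpose_smul, Matrix.smul_mul, Matrix.mul_smul, h]
  | smul_right r x y _ _ h =>
    simp only [Matrix.transpose_smul, Matrix.smul_mul, Matrix.mul_smul, h]

lemma mul_mem_nSpan {A : Matrix β β ℝ} {B : Matrix β γ ℝ} (hA : A ∈ cc.xSpan)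
    (hB : B ∈ cc.nSpan) : A * B ∈ cc.nSpan := by
  induction hA, hB using Submodule.span_induction₂ with
  | mem_mem x y hx hy =>
    obtain ⟨i, hi, rfl⟩ := hx
    obtain ⟨j, hj1, hj2, rfl⟩ := hy
    exact cc.X_mul_N i hi j hj1 hj2
  | zero_left y hy => simp
  | zero_right x hx => simp
  | add_left x y z _ _ _ h1 h2 => rw [Matrix.add_mul]; exact add_mem h1 h2
  | add_right x y z _ _ _ h1 h2 => rw [Matrix.mul_add]; exact add_mem h1 h2
  | smul_left r x y _ _ h => rw [Matrix.smul_mul]; exact Submodule.smul_mem _ _ h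
  | smul_right r x y _ _ h => rw [Matrix.mul_smul]; exact Submodule.smul_mem _ _ h

end BipartiteCC

namespace SecondBasis

variable {β γ : Type} [Fintype β] [DecidableEq β] [Fintype γ] [DecidableEq γ]
  {cc : BipartiteCC β γ} (sb : SecondBasis cc)

lemma L_mem_xSpan {t : ℕ} (ht : t ≤ cc.tb) : sb.L t ∈ cc.xSpan := by
  rw [BipartiteCC.xSpan, ← sb.L_span]
  exact Submodule.subset_span ⟨t, ht, rfl⟩

lemma D_mem_nSpan {r : ℕ} (hr : r ≤ cc.tbg - 1) : sb.D r ∈ cc.nSpan := by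
  rw [BipartiteCC.nSpan, ← sb.D_span]
  exact Submodule.subset_span ⟨r, hr, rfl⟩

lemma L_mul_L_self {t : ℕ} (ht : t ≤ cc.tb) (A : Matrix β γ ℝ) :
    sb.L t * (sb.L t * A) = sb.L t * A := by
  rw [← Matrix.mul_assoc, sb.L_mul_L t ht t ht, if_pos rfl]

lemma exists_L_mul_eq_smul_L {t : ℕ} (ht : t ≤ cc.tb) {A : Matrix β β ℝ} (hA : A ∈ cc.xSpan) :
    ∃ c : ℝ, sb.L t * A = c • sb.L t := by
  rw [BipartiteCC.xSpan, ← sb.L_span] at hA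
  induction hA using Submodule.span_induction with
  | mem x hx =>
    obtain ⟨r, hr, rfl⟩ := hx
    rw [sb.L_mul_L t ht r hr]
    split_ifs
    · exact ⟨1, (one_smul ℝ _).symm⟩
    · exact ⟨0, (zero_smul ℝ _).symm⟩
  | zero => exact ⟨0, by simp⟩
  | add x y _ _ hx hy =>
    obtain ⟨a, ha⟩ := hx
    obtain ⟨b, hb⟩ := hy
    exact ⟨a + b, by rw [Matrix.mul_add, ha, hb, add_smul]⟩
  | smul a x _ hx =>
    obtain ⟨b, hb⟩ := hx
    exact ⟨a * b, by rw [Matrix.mul_smul, hb, smul_smul]⟩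

lemma exists_mul_transpose_eq_smul_L {t : ℕ} (ht : t ≤ cc.tb) {x y : Matrix β γ ℝ}
    (hx : x ∈ cc.nSpan) (hy : y ∈ cc.nSpan) (hLx : sb.L t * x = x) :
    ∃ c : ℝ, x * yᵀ = c • sb.L t := by
  rw [← hLx, Matrix.mul_assoc]
  exact sb.exists_L_mul_eq_smul_L ht (cc.mul_transpose_mem_xSpan hx hy)

lemma exists_forall_L_mul_eq_smul {t : ℕ} (ht : t ≤ cc.tb) :
    ∃ g : Matrix β γ ℝ, ∀ m ∈ cc.nSpan, ∃ c : ℝ, sb.L t * m = c • g := by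
  have hmem : ∀ m ∈ cc.nSpan, sb.L t * m ∈ cc.nSpan :=
    fun m hm => cc.mul_mem_nSpan (sb.L_mem_xSpan ht) hm
  by_cases hzero : ∀ m ∈ cc.nSpan, sb.L t * m = 0
  · exact ⟨0, fun m hm => ⟨0, by rw [hzero m hm, zero_smul]⟩⟩
  push Not at hzero
  obtain ⟨m₀, hm₀, hne⟩ := hzero
  refine ⟨sb.L t * m₀, fun m hm => ?_⟩
  obtain ⟨a, ha⟩ := sb.exists_mul_transpose_eq_smul_L ht (hmem m₀ hm₀) (hmem m₀ hm₀)
    (sb.L_mul_L_self ht m₀)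
  obtain ⟨b, hb⟩ := sb.exists_mul_transpose_eq_smul_L ht (hmem m₀ hm₀) (hmem m hm)
    (sb.L_mul_L_self ht m₀)
  have ha₀ : a ≠ 0 := by
    rintro rfl
    exact hne (Matrix.eq_zero_of_trace_mul_transpose_self (by rw [ha, zero_smul, trace_zero]))
  -- with `x = L t m₀`, `y = L t m`: `a y = x xᵀ y = x yᵀ x = b x`
  have key : a • (sb.L t * m) = b • (sb.L t * m₀) :=
    calc a • (sb.L t * m) = (a • sb.L t) * (sb.L t * m) := by
          rw [Matrix.smul_mul, sb.L_mul_L_self ht]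
      _ = (sb.L t * m₀) * ((sb.L t * m₀)ᵀ * (sb.L t * m)) := by rw [← ha, Matrix.mul_assoc]
      _ = ((sb.L t * m₀) * (sb.L t * m)ᵀ) * (sb.L t * m₀) := by
        rw [cc.transpose_mul_comm_of_mem_nSpan (hmem m₀ hm₀) (hmem m hm)]
        exact (Matrix.mul_assoc _ _ _).symm
      _ = b • (sb.L t * m₀) := by rw [hb, Matrix.smul_mul, sb.L_mul_L_self ht]
  exact ⟨a⁻¹ * b, by rw [mul_smul, ← key, smul_smul, inv_mul_cancel₀ ha₀, one_smul]⟩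

lemma tbg_le_tb_add_one (sb : SecondBasis cc) : cc.tbg ≤ cc.tb + 1 := by
  classical
  choose g hg using fun t : Fin (cc.tb + 1) => sb.exists_forall_L_mul_eq_smul (t := t) (by omega)
  have hspan : cc.nSpan ≤ Submodule.span ℝ (Set.range g) := by
    intro m hm
    have hm_sum : m = ∑ t : Fin (cc.tb + 1), sb.L t * m := by
      rw [← Matrix.sum_mul, Fin.sum_univ_eq_sum_range (fun t => sb.L t), sb.L_sum, Matrix.one_mul]
    rw [hm_sum]
    refine Submodule.sum_mem _ fun t _ => ?_
    obtain ⟨c, hc⟩ := hg t m hm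
    rw [hc]
    exact Submodule.smul_mem _ _ (Submodule.subset_span ⟨t, rfl⟩)
  have hD : Set.range (fun r : Fin cc.tbg => sb.D r) ≤ Submodule.span ℝ (Set.range g) := by
    rintro _ ⟨r, rfl⟩
    exact hspan (sb.D_mem_nSpan (by omega))
  simpa using (linearIndependent_le_span_aux' _ sb.D_indep _ hD).trans (Fintype.card_range_le g)

lemma trace_D_mul_transpose_D {r s : ℕ} (hr : r ≤ cc.tbg - 1) (hs : s ≤ cc.tbg - 1) :
    (sb.D r * (sb.D s)ᵀ).trace = if r = s then (sb.L r).trace else 0 := by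
  split_ifs with hrs
  · rw [hrs, sb.L_eq_DDt s hs]
  have hle := sb.tbg_le_tb_add_one
  -- the squared Frobenius norm of `Dₛᵀ Dᵣ` is `tr (Lᵣ Lₛ) = 0`
  have hP : (sb.D s)ᵀ * sb.D r = 0 := by
    apply Matrix.eq_zero_of_trace_mul_transpose_self
    rw [Matrix.transpose_mul, Matrix.transpose_transpose, Matrix.mul_assoc, trace_mul_comm]
    simp only [← Matrix.mul_assoc]
    rw [← sb.L_eq_DDt r hr, Matrix.mul_assoc, ← sb.L_eq_DDt s hs,
      sb.L_mul_L r (by omega) s (by omega), if_neg hrs, trace_zero]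
  rw [trace_mul_comm, hP, trace_zero]

lemma trace_sum_smul_D_mul_transpose_D (a : ℕ → ℝ) {h : ℕ} (hh : h ≤ cc.tbg - 1) :
    ((∑ r ∈ Finset.range cc.tbg, a r • sb.D r) * (sb.D h)ᵀ).trace = a h * (sb.L h).trace := by
  have hpos := cc.tbg_pos
  rw [Matrix.sum_mul, trace_sum,
    Finset.sum_eq_single_of_mem h (Finset.mem_range.mpr (by omega))]
  · rw [Matrix.smul_mul, trace_smul, sb.trace_D_mul_transpose_D hh hh, if_pos rfl, smul_eq_mul]
  · intro r hr hne
    rw [Finset.mem_range] at hr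
    rw [Matrix.smul_mul, trace_smul, sb.trace_D_mul_transpose_D (by omega) hh, if_neg hne,
      smul_zero]

lemma krein_mul_trace_L_mul_card [Nonempty β] [Nonempty γ] {Q : ℕ → ℕ → ℝ} {Δ : ℕ → ℝ}
    {i j h : ℕ} (hh : h ≤ cc.tbg - 1)
    (hDi : sb.D i = (√(Fintype.card β * Fintype.card γ))⁻¹ •
      ∑ l ∈ Finset.Icc 1 cc.tbg, Q l i • cc.N l)
    (hDj : sb.D j = (√(Fintype.card β * Fintype.card γ))⁻¹ •
      ∑ l ∈ Finset.Icc 1 cc.tbg, Q l j • cc.N l)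
    (hDh : sb.D h = (√(Fintype.card β * Fintype.card γ))⁻¹ •
      ∑ l ∈ Finset.Icc 1 cc.tbg, Q l h • cc.N l)
    (hΔ : sb.D i ⊙ sb.D j = (√(Fintype.card β * Fintype.card γ))⁻¹ •
      ∑ r ∈ Finset.range cc.tbg, Δ r • sb.D r) :
    Δ h * (sb.L h).trace * (Fintype.card β * Fintype.card γ) =
      ∑ l ∈ Finset.Icc 1 cc.tbg, Q l h * Q l i * Q l j * ∑ u, ∑ v, cc.N l u v := by
  set c := √((Fintype.card β : ℝ) * Fintype.card γ)
  have hc2 : c ^ 2 = Fintype.card β * Fintype.card γ := Real.sq_sqrt (by positivity)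
  have hc : c ≠ 0 := Real.sqrt_ne_zero'.mpr (by positivity)
  have hDDD : sb.D i ⊙ sb.D j ⊙ sb.D h =
      c⁻¹ ^ 3 • ∑ l ∈ Finset.Icc 1 cc.tbg, (Q l h * Q l i * Q l j) • cc.N l := by
    rw [hDi, hDj, hDh]
    simp only [smul_hadamard, hadamard_smul, cc.sum_smul_N_hadamard_sum_smul_N, smul_smul]
    congr 1
    · ring
    · exact Finset.sum_congr rfl fun l _ => by ring_nf
  have hpair : c⁻¹ * (Δ h * (sb.L h).trace) = c⁻¹ ^ 3 *
      ∑ l ∈ Finset.Icc 1 cc.tbg, Q l h * Q l i * Q l j * ∑ u, ∑ v, cc.N l u v :=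
    calc c⁻¹ * (Δ h * (sb.L h).trace) = ((sb.D i ⊙ sb.D j) * (sb.D h)ᵀ).trace := by
          rw [hΔ, Matrix.smul_mul, trace_smul, sb.trace_sum_smul_D_mul_transpose_D _ hh,
            smul_eq_mul]
      _ = ∑ u, ∑ v, (sb.D i ⊙ sb.D j ⊙ sb.D h) u v := (sum_hadamard_eq _ _).symm
      _ = _ := by
          simp only [hDDD, Matrix.smul_apply, smul_eq_mul, ← Finset.mul_sum,
            sum_sum_sum_smul_apply]
  field_simp at hpair
  linear_combination hpair - Δ h * (sb.L h).trace * hc2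

end SecondBasis

/-- formula for the Krein parameters `Δ i j h` defined by
`D i ∘ D j = (1/√(|β||γ|)) ∑ₕ Δ i j h • D h`, and its symmetry in the two fibres. -/
theorem bipartiteCC_krein_Delta_formula (β γ : Type) [Fintype β] [DecidableEq β]
    [Nonempty β] [Fintype γ] [DecidableEq γ] [Nonempty γ]
    (cc : BipartiteCC β γ) (sb : SecondBasis cc)
    (Q : ℕ → ℕ → ℝ)
    (hQ : ∀ i, i ≤ cc.tbg - 1 →
      sb.D i = (Real.sqrt ((Fintype.card β : ℝ) * (Fintype.card γ : ℝ)))⁻¹ •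
        ∑ j ∈ Finset.Icc 1 cc.tbg, Q j i • cc.N j)
    (k kt : ℕ → ℝ)
    (hk : ∀ l, 1 ≤ l → l ≤ cc.tbg → ∀ u : β, ∑ v : γ, cc.N l u v = k l)
    (hkt : ∀ l, 1 ≤ l → l ≤ cc.tbg → ∀ v : γ, ∑ u : β, cc.N l u v = kt l)
    (Del : ℕ → ℕ → ℕ → ℝ)
    (hDel : ∀ i, i ≤ cc.tbg - 1 → ∀ j, j ≤ cc.tbg - 1 →
      Matrix.hadamard (sb.D i) (sb.D j) =
        (Real.sqrt ((Fintype.card β : ℝ) * (Fintype.card γ : ℝ)))⁻¹ •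
          ∑ h ∈ Finset.range cc.tbg, Del i j h • sb.D h) :
    ∀ i, i ≤ cc.tbg - 1 → ∀ j, j ≤ cc.tbg - 1 → ∀ h, h ≤ cc.tbg - 1 →
      Matrix.trace (sb.L h) ≠ 0 →
      Del i j h = ((Fintype.card γ : ℝ) * Matrix.trace (sb.L h))⁻¹ *
          ∑ l ∈ Finset.Icc 1 cc.tbg, Q l h * Q l i * Q l j * k l ∧
      Del i j h = ((Fintype.card β : ℝ) * Matrix.trace (sb.R h))⁻¹ *
          ∑ l ∈ Finset.Icc 1 cc.tbg, Q l h * Q l i * Q l j * kt l := by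
  intro i hi j hj h hh hL
  have hpair := sb.krein_mul_trace_L_mul_card hh (hQ i hi) (hQ j hj) (hQ h hh) (hDel i hi j hj)
  have hβ : (Fintype.card β : ℝ) ≠ 0 := by positivity
  have hγ : (Fintype.card γ : ℝ) ≠ 0 := by positivity
  have htrR : (sb.R h).trace = (sb.L h).trace := by
    rw [sb.R_eq_DtD h hh, sb.L_eq_DDt h hh, trace_mul_comm]
  constructor
  · rw [Matrix.sum_mul_sum_sum_eq_card_mul_of_sum_row
      (fun l hl => hk l (Finset.mem_Icc.mp hl).1 (Finset.mem_Icc.mp hl).2)] at hpair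
    rw [eq_inv_mul_iff_mul_eq₀ (mul_ne_zero hγ hL)]
    exact mul_left_cancel₀ hβ (by linear_combination hpair)
  · rw [Matrix.sum_mul_sum_sum_eq_card_mul_of_sum_col
      (fun l hl => hkt l (Finset.mem_Icc.mp hl).1 (Finset.mem_Icc.mp hl).2)] at hpair
    rw [htrR, eq_inv_mul_iff_mul_eq₀ (mul_ne_zero hβ hL)]
    exact mul_left_cancel₀ hγ (by linear_combination hpair)
end

section
/- Let 𝒞 be a fibre-symmetric coherent configuration with two fibres (f = 2) admitting spectral idempotents satisfying (B1)–(B4), of type [[t+1, t],[t, t+1]], i.e., with t_{11} = t_{22} = t and t_{12} = t_{21} = t. Then 𝒞 is a bipartite coherent configuration: writing X_i := A_i^{11}, Y_i := A_i^{22}, N_h := A_h^{12}, conditions (C5) and (C6) hold; in particular every X_i lies in span_ℝ({N_j N_h^T : 1 ≤ j, h ≤ t} ∪ {I}) and every Y_i lies in span_ℝ({N_j^T N_h : 1 ≤ j, h ≤ t} ∪ {I}). -/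
open Matrix Polynomial

/-- `ε i j = 1 - δ_{ij}`. -/
def eps {ι : Type*} [DecidableEq ι] (i j : ι) : ℕ := if i = j then 0 else 1

/-- A fibre-symmetric coherent configuration in block form (fibres indexed by `ι`,
fibre sizes `x i`), admitting spectral idempotents satisfying (B1)–(B4). -/

structure SpecCC (ι : Type) [Fintype ι] [DecidableEq ι] (x : ι → ℕ) where
  /-- the numbers `t i j` of Schur idempotents in each block -/
  t : ι → ι → ℕ
  t_ge : ∀ i j, eps i j ≤ t i j
  /-- the Schur idempotents `A r i j` for `eps i j ≤ r ≤ t i j` -/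
  A : (i j : ι) → ℕ → Matrix (Fin (x i)) (Fin (x j)) ℝ
  A_zero_one : ∀ i j r, eps i j ≤ r → r ≤ t i j → ∀ u v, A i j r u v = 0 ∨ A i j r u v = 1
  A_ne_zero : ∀ i j r, eps i j ≤ r → r ≤ t i j → A i j r ≠ 0
  /-- (A1) -/
  A_diag_zero : ∀ i, A i i 0 = 1
  /-- (A2) -/
  A_sum_eq_J : ∀ i j, ∑ r ∈ Finset.Icc (eps i j) (t i j), A i j r = Matrix.of fun _ _ => (1 : ℝ)
  /-- (A3) -/
  A_transpose : ∀ i j r, eps i j ≤ r → r ≤ t i j →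
      ∃ s, eps j i ≤ s ∧ s ≤ t j i ∧ (A i j r)ᵀ = A j i s
  /-- (A4) -/
  A_mul_mem : ∀ i j h r s, eps i j ≤ r → r ≤ t i j → eps j h ≤ s → s ≤ t j h →
      A i j r * A j h s ∈ Submodule.span ℝ {M | ∃ u, eps i h ≤ u ∧ u ≤ t i h ∧ M = A i h u}
  /-- fibre-symmetric -/
  fibre_symm : ∀ i r, r ≤ t i i → (A i i r)ᵀ = A i i r
  /-- the spectral idempotents `E r i j` for `0 ≤ r ≤ t i j - eps i j` -/
  E : (i j : ι) → ℕ → Matrix (Fin (x i)) (Fin (x j)) ℝ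
  /-- (B1) -/
  E_zero : ∀ i j, E i j 0 =
      (Real.sqrt ((x i : ℝ) * (x j : ℝ)))⁻¹ • Matrix.of fun _ _ => (1 : ℝ)
  /-- (B2): linear independence -/
  E_indep : ∀ i j, LinearIndependent ℝ (fun r : Fin (t i j - eps i j + 1) => E i j r.val)
  /-- (B2): the `E`'s span the same space as the `A`'s -/
  E_span : ∀ i j,
      Submodule.span ℝ {M | ∃ r, r ≤ t i j - eps i j ∧ M = E i j r} =
      Submodule.span ℝ {M | ∃ r, eps i j ≤ r ∧ r ≤ t i j ∧ M = A i j r}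
  /-- (B3) -/
  E_transpose : ∀ i j r, r ≤ t i j - eps i j → (E i j r)ᵀ = E j i r
  /-- (B4) -/
  E_mul : ∀ i j h r s, r ≤ t i j - eps i j → s ≤ t j h - eps j h →
      E i j r * E j h s = if r = s then E i h r else 0

lemma mem_span_exists_coeffs {M : Type*} [AddCommGroup M] [Module ℝ M]
    (n m : ℕ) (hmn : m = n + 1) (v : ℕ → M) (w : M)
    (hm : w ∈ Submodule.span ℝ {N | ∃ r, r ≤ n ∧ N = v r}) :
    ∃ c : Fin m → ℝ, ∑ r, c r • v r.val = w := by
  subst hmn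
  have hset : {N | ∃ r, r ≤ n ∧ N = v r} = Set.range (fun r : Fin (n+1) => v r.val) := by
    ext N
    constructor
    · rintro ⟨r, hr, rfl⟩; exact ⟨⟨r, by omega⟩, rfl⟩
    · rintro ⟨r, rfl⟩; exact ⟨r.val, by omega, rfl⟩
  rw [hset] at hm
  exact (Submodule.mem_span_range_iff_exists_fun ℝ).mp hm

lemma mem_span_exists_coeffs' {M : Type*} [AddCommGroup M] [Module ℝ M]
    (n : ℕ) (v : ℕ → M) (w : M)
    (hm : w ∈ Submodule.span ℝ {N | ∃ r, 1 ≤ r ∧ r ≤ n ∧ N = v r}) :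
    ∃ c : Fin n → ℝ, ∑ u, c u • v (u.val + 1) = w := by
  have hset : {N | ∃ r, 1 ≤ r ∧ r ≤ n ∧ N = v r}
      = Set.range (fun u : Fin n => v (u.val + 1)) := by
    ext N
    constructor
    · rintro ⟨r, h1, h2, rfl⟩
      exact ⟨⟨r - 1, by omega⟩, by simp only []; rw [Nat.sub_add_cancel h1]⟩
    · rintro ⟨u, rfl⟩; exact ⟨u.val + 1, by omega, by have := u.isLt; omega, rfl⟩
  rw [hset] at hm
  exact (Submodule.mem_span_range_iff_exists_fun ℝ).mp hm

lemma sum_mul_sum_smul {k : ℕ} {α β γ : Type*} [Fintype β]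
    (c d : Fin k → ℝ) (P : Fin k → Matrix α β ℝ) (Q : Fin k → Matrix β γ ℝ) :
    (∑ u, c u • P u) * (∑ w, d w • Q w) = ∑ u, ∑ w, (c u * d w) • (P u * Q w) := by
  rw [Matrix.sum_mul]
  refine Finset.sum_congr rfl fun u _ => ?_
  rw [Matrix.mul_sum]
  refine Finset.sum_congr rfl fun w _ => ?_
  rw [Matrix.smul_mul, Matrix.mul_smul, smul_smul]

lemma prod_expand {k : ℕ} {α β γ : Type*} [Fintype α] [Fintype β] [Fintype γ]
    (c d : Fin k → ℝ)
    (P : Fin k → Matrix α β ℝ) (Q : Fin k → Matrix β γ ℝ) (R : Fin k → Matrix α γ ℝ)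
    (h : ∀ r s, P r * Q s = if r = s then R r else 0) :
    (∑ r, c r • P r) * (∑ s, d s • Q s) = ∑ r, (c r * d r) • R r := by
  rw [sum_mul_sum_smul]
  refine Finset.sum_congr rfl fun r _ => ?_
  rw [Finset.sum_eq_single r]
  · rw [h, if_pos rfl]
  · intro s _ hs
    rw [h, if_neg (Ne.symm hs), smul_zero]
  · intro hr; exact absurd (Finset.mem_univ r) hr

/-- a fibre-symmetric two-fibre coherent configuration admitting spectral
idempotents satisfying (B1)–(B4), of type `[[t+1, t], [t, t+1]]`, is a bipartite coherent
configuration: with `X i = A i ^{11}`, `Y i = A i ^{22}`, `N h = A h ^{12}`, conditions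
(C5) and (C6) hold. -/
theorem specCC_type_t_is_bipartiteCC (x : Fin 2 → ℕ) (hx : ∀ i, 1 ≤ x i)
    (cfg : SpecCC (Fin 2) x) (t : ℕ) (ht : 1 ≤ t)
    (h00 : cfg.t 0 0 = t) (h11 : cfg.t 1 1 = t)
    (h01 : cfg.t 0 1 = t) (h10 : cfg.t 1 0 = t) :
    (∀ i, 1 ≤ i → i ≤ t → ∀ j, 1 ≤ j → j ≤ t →
      cfg.A 0 1 i * (cfg.A 0 1 j)ᵀ = cfg.A 0 1 j * (cfg.A 0 1 i)ᵀ ∧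
      (cfg.A 0 1 i)ᵀ * cfg.A 0 1 j = (cfg.A 0 1 j)ᵀ * cfg.A 0 1 i) ∧
    (∀ i, i ≤ t → cfg.A 0 0 i ∈ Submodule.span ℝ
      (insert 1 {M | ∃ u, 1 ≤ u ∧ u ≤ t ∧ ∃ w, 1 ≤ w ∧ w ≤ t ∧
        M = cfg.A 0 1 u * (cfg.A 0 1 w)ᵀ})) ∧
    (∀ i, i ≤ t → cfg.A 1 1 i ∈ Submodule.span ℝ
      (insert 1 {M | ∃ u, 1 ≤ u ∧ u ≤ t ∧ ∃ w, 1 ≤ w ∧ w ≤ t ∧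
        M = (cfg.A 0 1 u)ᵀ * cfg.A 0 1 w})) := by
  have heps01 : eps (0 : Fin 2) 1 = 1 := by decide
  have heps10 : eps (1 : Fin 2) 0 = 1 := by decide
  have heps00 : eps (0 : Fin 2) 0 = 0 := by decide
  have heps11 : eps (1 : Fin 2) 1 = 0 := by decide
  -- coefficients of the A 0 1 u in the E 0 1 basis
  have hNc : ∀ u : ℕ, ∃ c : Fin t → ℝ, 1 ≤ u → u ≤ t →
      ∑ r, c r • cfg.E 0 1 r.val = cfg.A 0 1 u := by
    intro u
    by_cases hu : 1 ≤ u ∧ u ≤ t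
    · have hmem : cfg.A 0 1 u ∈ Submodule.span ℝ
          {M | ∃ r, r ≤ cfg.t 0 1 - eps 0 1 ∧ M = cfg.E 0 1 r} :=
        (SetLike.ext_iff.mp (cfg.E_span 0 1) _).mpr
          (Submodule.subset_span ⟨u, by omega, by omega, rfl⟩)
      obtain ⟨c, hc⟩ := mem_span_exists_coeffs (cfg.t 0 1 - eps 0 1) t (by have hh : eps (0:ℕ) 1 = 1 := rfl; omega)
        (cfg.E 0 1) _ hmem
      exact ⟨c, fun _ _ => hc⟩
    · exact ⟨0, fun h1 h2 => absurd ⟨h1, h2⟩ hu⟩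
  choose c hc using hNc
  -- transposed expansion
  have hcT : ∀ u, 1 ≤ u → u ≤ t →
      ∑ r : Fin t, c u r • cfg.E 1 0 r.val = (cfg.A 0 1 u)ᵀ := by
    intro u h1 h2
    rw [← hc u h1 h2, Matrix.transpose_sum]
    refine Finset.sum_congr rfl fun r _ => ?_
    rw [Matrix.transpose_smul, cfg.E_transpose 0 1 r.val (by have := r.isLt; omega)]
  -- product expansions
  have hprodX : ∀ u, 1 ≤ u → u ≤ t → ∀ w, 1 ≤ w → w ≤ t →
      cfg.A 0 1 u * (cfg.A 0 1 w)ᵀ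
        = ∑ r : Fin t, (c u r * c w r) • cfg.E 0 0 r.val := by
    intro u hu1 hu2 w hw1 hw2
    rw [← hc u hu1 hu2, ← hcT w hw1 hw2]
    refine prod_expand _ _ _ _ _ (fun r s => ?_)
    rw [cfg.E_mul 0 1 0 r.val s.val (by have := r.isLt; omega) (by have := s.isLt; omega)]
    by_cases h : r = s
    · subst h; simp
    · rw [if_neg (fun hh : r.val = s.val => h (Fin.ext hh)), if_neg h]
  have hprodY : ∀ u, 1 ≤ u → u ≤ t → ∀ w, 1 ≤ w → w ≤ t →
      (cfg.A 0 1 u)ᵀ * cfg.A 0 1 w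
        = ∑ r : Fin t, (c u r * c w r) • cfg.E 1 1 r.val := by
    intro u hu1 hu2 w hw1 hw2
    rw [← hc w hw1 hw2, ← hcT u hu1 hu2]
    refine prod_expand _ _ _ _ _ (fun r s => ?_)
    rw [cfg.E_mul 1 0 1 r.val s.val (by have := r.isLt; omega) (by have := s.isLt; omega)]
    by_cases h : r = s
    · subst h; simp
    · rw [if_neg (fun hh : r.val = s.val => h (Fin.ext hh)), if_neg h]
  -- the identity is the sum of the diagonal spectral idempotents
  have hIdSum : ∀ i : Fin 2, cfg.t i i = t →
      (∑ r : Fin (t+1), cfg.E i i r.val) = 1 := by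
    intro i hti
    have hepsii : eps i i = 0 := by simp [eps]
    have hmem : (1 : Matrix (Fin (x i)) (Fin (x i)) ℝ) ∈ Submodule.span ℝ
        {M | ∃ r, r ≤ cfg.t i i - eps i i ∧ M = cfg.E i i r} :=
      (SetLike.ext_iff.mp (cfg.E_span i i) _).mpr
        (Submodule.subset_span ⟨0, by omega, by omega, (cfg.A_diag_zero i).symm⟩)
    obtain ⟨a, ha⟩ := mem_span_exists_coeffs (cfg.t i i - eps i i) (t+1) (by omega)
      (cfg.E i i) _ hmem
    have hone : ∀ s : Fin (t+1), a s = 1 := by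
      intro s
      have h1 : (∑ r : Fin (t+1), a r • cfg.E i i r.val) * cfg.E i i s.val
          = cfg.E i i s.val := by rw [ha, one_mul]
      have h2 : (∑ r : Fin (t+1), a r • cfg.E i i r.val) * cfg.E i i s.val
          = a s • cfg.E i i s.val := by
        rw [Matrix.sum_mul]
        rw [Finset.sum_eq_single s]
        · rw [Matrix.smul_mul,
            cfg.E_mul i i i s.val s.val (by have := s.isLt; omega) (by have := s.isLt; omega),
            if_pos rfl]
        · intro r _ hrs
          rw [Matrix.smul_mul,
            cfg.E_mul i i i r.val s.val (by have := r.isLt; omega) (by have := s.isLt; omega),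
            if_neg (fun hh : r.val = s.val => hrs (Fin.ext hh)), smul_zero]
        · intro hr; exact absurd (Finset.mem_univ s) hr
      have hE : cfg.E i i s.val ≠ 0 := by
        have := (cfg.E_indep i i).ne_zero ⟨s.val, by omega⟩
        simpa using this
      have h3 : (a s - 1) • cfg.E i i s.val = 0 := by
        rw [sub_smul, one_smul, h2.symm.trans h1, sub_self]
      rcases smul_eq_zero.mp h3 with h4 | h4
      · linarith [sub_eq_zero.mp h4]
      · exact absurd h4 hE
    rw [← ha]
    refine Finset.sum_congr rfl fun r _ => ?_
    rw [hone r, one_smul]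
  have hlast : ∀ i : Fin 2, cfg.t i i = t →
      cfg.E i i t = 1 - ∑ s : Fin t, cfg.E i i s.val := by
    intro i hti
    have h := hIdSum i hti
    rw [Fin.sum_univ_castSucc] at h
    simpa using eq_sub_of_add_eq' h
  -- expansion of E 0 1 s in the A 0 1 u's
  have hEmem : ∀ s : Fin t, ∃ d : Fin t → ℝ,
      ∑ u, d u • cfg.A 0 1 (u.val + 1) = cfg.E 0 1 s.val := by
    intro s
    refine mem_span_exists_coeffs' t (cfg.A 0 1) _ ?_
    have hmem : cfg.E 0 1 s.val ∈ Submodule.span ℝ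
        {M | ∃ r, eps (0:Fin 2) 1 ≤ r ∧ r ≤ cfg.t 0 1 ∧ M = cfg.A 0 1 r} :=
      (SetLike.ext_iff.mp (cfg.E_span 0 1) _).mp
        (Submodule.subset_span ⟨s.val, by have := s.isLt; omega, rfl⟩)
    simp only [heps01, h01] at hmem
    exact hmem
  -- E 0 0 s and E 1 1 s lie in the product spans, for s < t
  have hE00mem : ∀ s : Fin t, cfg.E 0 0 s.val ∈ Submodule.span ℝ
      (insert 1 {M | ∃ u, 1 ≤ u ∧ u ≤ t ∧ ∃ w, 1 ≤ w ∧ w ≤ t ∧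
        M = cfg.A 0 1 u * (cfg.A 0 1 w)ᵀ}) := by
    intro s
    obtain ⟨d, hd⟩ := hEmem s
    have hT : (∑ u : Fin t, d u • cfg.A 0 1 (u.val + 1))ᵀ
        = ∑ u : Fin t, d u • (cfg.A 0 1 (u.val + 1))ᵀ := by
      rw [Matrix.transpose_sum]
      exact Finset.sum_congr rfl fun u _ => Matrix.transpose_smul _ _
    have key : cfg.E 0 0 s.val
        = ∑ u : Fin t, ∑ w : Fin t, (d u * d w) •
            (cfg.A 0 1 (u.val + 1) * (cfg.A 0 1 (w.val + 1))ᵀ) := by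
      have h1 : cfg.E 0 0 s.val = cfg.E 0 1 s.val * (cfg.E 0 1 s.val)ᵀ := by
        rw [cfg.E_transpose 0 1 s.val (by have := s.isLt; omega),
          cfg.E_mul 0 1 0 s.val s.val (by have := s.isLt; omega) (by have := s.isLt; omega),
          if_pos rfl]
      rw [h1, ← hd, hT, sum_mul_sum_smul]
    rw [key]
    refine Submodule.sum_mem _ fun u _ => Submodule.sum_mem _ fun w _ =>
      Submodule.smul_mem _ _ (Submodule.subset_span ?_)
    exact Set.mem_insert_of_mem _ ⟨u.val + 1, by omega, by have := u.isLt; omega,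
      w.val + 1, by omega, by have := w.isLt; omega, rfl⟩
  have hE11mem : ∀ s : Fin t, cfg.E 1 1 s.val ∈ Submodule.span ℝ
      (insert 1 {M | ∃ u, 1 ≤ u ∧ u ≤ t ∧ ∃ w, 1 ≤ w ∧ w ≤ t ∧
        M = (cfg.A 0 1 u)ᵀ * cfg.A 0 1 w}) := by
    intro s
    obtain ⟨d, hd⟩ := hEmem s
    have hT : (∑ u : Fin t, d u • cfg.A 0 1 (u.val + 1))ᵀ
        = ∑ u : Fin t, d u • (cfg.A 0 1 (u.val + 1))ᵀ := by
      rw [Matrix.transpose_sum]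
      exact Finset.sum_congr rfl fun u _ => Matrix.transpose_smul _ _
    have key : cfg.E 1 1 s.val
        = ∑ u : Fin t, ∑ w : Fin t, (d u * d w) •
            ((cfg.A 0 1 (u.val + 1))ᵀ * cfg.A 0 1 (w.val + 1)) := by
      have h1 : cfg.E 1 1 s.val = (cfg.E 0 1 s.val)ᵀ * cfg.E 0 1 s.val := by
        rw [cfg.E_transpose 0 1 s.val (by have := s.isLt; omega),
          cfg.E_mul 1 0 1 s.val s.val (by have := s.isLt; omega) (by have := s.isLt; omega),
          if_pos rfl]
      rw [h1, ← hd, hT, sum_mul_sum_smul]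
    rw [key]
    refine Submodule.sum_mem _ fun u _ => Submodule.sum_mem _ fun w _ =>
      Submodule.smul_mem _ _ (Submodule.subset_span ?_)
    exact Set.mem_insert_of_mem _ ⟨u.val + 1, by omega, by have := u.isLt; omega,
      w.val + 1, by omega, by have := w.isLt; omega, rfl⟩
  refine ⟨fun i hi1 hi2 j hj1 hj2 => ⟨?_, ?_⟩, ?_, ?_⟩
  · rw [hprodX i hi1 hi2 j hj1 hj2, hprodX j hj1 hj2 i hi1 hi2]
    exact Finset.sum_congr rfl fun r _ => by rw [mul_comm]
  · rw [hprodY i hi1 hi2 j hj1 hj2, hprodY j hj1 hj2 i hi1 hi2]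
    exact Finset.sum_congr rfl fun r _ => by rw [mul_comm]
  · intro i hi
    have hmem : cfg.A 0 0 i ∈ Submodule.span ℝ
        {M | ∃ r, r ≤ cfg.t 0 0 - eps (0 : Fin 2) 0 ∧ M = cfg.E 0 0 r} :=
      (SetLike.ext_iff.mp (cfg.E_span 0 0) _).mpr
        (Submodule.subset_span ⟨i, by omega, by omega, rfl⟩)
    refine Submodule.span_le.mpr ?_ hmem
    rintro M ⟨r, hr, rfl⟩
    rcases Nat.lt_or_ge r t with h | h
    · exact hE00mem ⟨r, h⟩
    · have hrt : r = t := by omega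
      subst hrt
      rw [hlast 0 h00]
      exact Submodule.sub_mem _
        (Submodule.subset_span (Set.mem_insert _ _))
        (Submodule.sum_mem _ fun s _ => hE00mem s)
  · intro i hi
    have hmem : cfg.A 1 1 i ∈ Submodule.span ℝ
        {M | ∃ r, r ≤ cfg.t 1 1 - eps (1 : Fin 2) 1 ∧ M = cfg.E 1 1 r} :=
      (SetLike.ext_iff.mp (cfg.E_span 1 1) _).mpr
        (Submodule.subset_span ⟨i, by omega, by omega, rfl⟩)
    refine Submodule.span_le.mpr ?_ hmem
    rintro M ⟨r, hr, rfl⟩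
    rcases Nat.lt_or_ge r t with h | h
    · exact hE11mem ⟨r, h⟩
    · have hrt : r = t := by omega
      subst hrt
      rw [hlast 1 h11]
      exact Submodule.sub_mem _
        (Submodule.subset_span (Set.mem_insert _ _))
        (Submodule.sum_mem _ fun s _ => hE11mem s)
end

section
/- Hobart's two-fibre coherent configurations of type [[2,2],[2,4]] are not bipartite coherent configurations (key identities): Let N_1 be a v×b 01-matrix each of whose columns sums to k, with 0 < k, and set N_2 := J − N_1 (J the all-ones v×b matrix). Then: (i) N_1^T N_2 = N_2^T N_1 = kJ − N_1^T N_1 (J here the all-ones b×b matrix); (ii) N_2^T N_2 = (v − 2k)J + N_1^T N_1 = ((v − 2k)/k)(N_1^T N_1 + N_1^T N_2) + N_1^T N_1. Consequently span_ℝ{N_1^T N_1, N_1^T N_2, N_2^T N_1, N_2^T N_2} = span_ℝ{N_1^T N_1, N_1^T N_2} has dimension at most 2; in particular, if the block relations Y_1, Y_2, Y_3 satisfy N_1^T N_1 = kI + t_1 Y_1 + t_2 Y_2 + t_3 Y_3 with I + Y_1 + Y_2 + Y_3 = J and the span of {I, Y_1, Y_2, Y_3} has dimension 4, then {N_i^T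 N_j : i,j ∈ {1,2}} ∪ {I} cannot span span_ℝ{I, Y_1, Y_2, Y_3}, so condition (C6) of a bipartite coherent configuration fails. -/
open Matrix

/-- Hobart's two-fibre coherent configurations of type `[[2,2],[2,4]]` are
not bipartite coherent configurations.  With `N₁` the incidence matrix (columns summing to
`k > 0`) and `N₂ = J - N₁`, the products `Nᵢᵀ Nⱼ` span a space of dimension at most 2, so
if `I, Y₁, Y₂, Y₃` are linearly independent block relations with
`N₁ᵀ N₁ = k I + t₁ Y₁ + t₂ Y₂ + t₃ Y₃` and `I + Y₁ + Y₂ + Y₃ = J`, then condition (C6)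
fails. -/
theorem hobart_type_not_bipartiteCC (v b : ℕ)
    (N₁ N₂ : Matrix (Fin v) (Fin b) ℝ)
    (hN₁01 : ∀ u w, N₁ u w = 0 ∨ N₁ u w = 1)
    (k : ℝ) (hk : 0 < k)
    (hcol : ∀ w, ∑ u, N₁ u w = k)
    (hN₂ : N₂ = (Matrix.of fun _ _ => (1 : ℝ)) - N₁) :
    N₁ᵀ * N₂ = k • (Matrix.of fun _ _ => (1 : ℝ)) - N₁ᵀ * N₁ ∧
    N₂ᵀ * N₁ = k • (Matrix.of fun _ _ => (1 : ℝ)) - N₁ᵀ * N₁ ∧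
    N₂ᵀ * N₂ = ((v : ℝ) - 2 * k) • (Matrix.of fun _ _ => (1 : ℝ)) + N₁ᵀ * N₁ ∧
    N₂ᵀ * N₂ = (((v : ℝ) - 2 * k) / k) • (N₁ᵀ * N₁ + N₁ᵀ * N₂) + N₁ᵀ * N₁ ∧
    Submodule.span ℝ {N₁ᵀ * N₁, N₁ᵀ * N₂, N₂ᵀ * N₁, N₂ᵀ * N₂} =
      Submodule.span ℝ {N₁ᵀ * N₁, N₁ᵀ * N₂} ∧
    Module.finrank ℝ
      (Submodule.span ℝ {N₁ᵀ * N₁, N₁ᵀ * N₂, N₂ᵀ * N₁, N₂ᵀ * N₂}) ≤ 2 ∧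
    ∀ (Y₁ Y₂ Y₃ : Matrix (Fin b) (Fin b) ℝ) (t₁ t₂ t₃ : ℝ),
      N₁ᵀ * N₁ = k • (1 : Matrix (Fin b) (Fin b) ℝ) + t₁ • Y₁ + t₂ • Y₂ + t₃ • Y₃ →
      1 + Y₁ + Y₂ + Y₃ = (Matrix.of fun _ _ => (1 : ℝ)) →
      LinearIndependent ℝ ![(1 : Matrix (Fin b) (Fin b) ℝ), Y₁, Y₂, Y₃] →
      Submodule.span ℝ
          (insert (1 : Matrix (Fin b) (Fin b) ℝ)
            {N₁ᵀ * N₁, N₁ᵀ * N₂, N₂ᵀ * N₁, N₂ᵀ * N₂}) ≠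
        Submodule.span ℝ {(1 : Matrix (Fin b) (Fin b) ℝ), Y₁, Y₂, Y₃} := by
  set J : Matrix (Fin v) (Fin b) ℝ := Matrix.of fun _ _ => (1 : ℝ) with hJ
  have h1 : N₁ᵀ * J = k • (Matrix.of fun _ _ => (1 : ℝ)) := by
    ext i j
    simp [Matrix.mul_apply, hJ, hcol]
  have h2 : Jᵀ * N₁ = k • (Matrix.of fun _ _ => (1 : ℝ)) := by
    ext i j
    simp [Matrix.mul_apply, hJ, hcol]
  have h3 : Jᵀ * J = (v : ℝ) • (Matrix.of fun _ _ => (1 : ℝ)) := by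
    ext i j
    simp [Matrix.mul_apply, hJ]
  have e1 : N₁ᵀ * N₂ = k • (Matrix.of fun _ _ => (1 : ℝ)) - N₁ᵀ * N₁ := by
    rw [hN₂, Matrix.mul_sub, h1]
  have e2 : N₂ᵀ * N₁ = k • (Matrix.of fun _ _ => (1 : ℝ)) - N₁ᵀ * N₁ := by
    rw [hN₂, Matrix.transpose_sub, Matrix.sub_mul, h2]
  have e3 : N₂ᵀ * N₂ = ((v : ℝ) - 2 * k) • (Matrix.of fun _ _ => (1 : ℝ)) + N₁ᵀ * N₁ := by
    rw [hN₂, Matrix.transpose_sub, Matrix.sub_mul, Matrix.mul_sub, Matrix.mul_sub,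
      h1, h2, h3]
    module
  have eJ : (Matrix.of fun (_ _ : Fin b) => (1 : ℝ)) = k⁻¹ • (N₁ᵀ * N₁ + N₁ᵀ * N₂) := by
    rw [e1]
    rw [smul_add]
    rw [smul_sub, smul_smul, inv_mul_cancel₀ hk.ne', one_smul]
    abel
  have e4 : N₂ᵀ * N₂ = (((v : ℝ) - 2 * k) / k) • (N₁ᵀ * N₁ + N₁ᵀ * N₂) + N₁ᵀ * N₁ := by
    rw [e3, eJ, smul_smul, div_eq_mul_inv]
  set A := N₁ᵀ * N₁ with hA
  set B := N₁ᵀ * N₂ with hB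
  have espan : Submodule.span ℝ {A, B, N₂ᵀ * N₁, N₂ᵀ * N₂} = Submodule.span ℝ {A, B} := by
    apply le_antisymm
    · rw [Submodule.span_le]
      intro x hx
      simp only [Set.mem_insert_iff, Set.mem_singleton_iff] at hx
      have hAmem : A ∈ Submodule.span ℝ {A, B} :=
        Submodule.subset_span (by simp)
      have hBmem : B ∈ Submodule.span ℝ ({A, B} : Set _) :=
        Submodule.subset_span (by simp)
      rcases hx with rfl | rfl | rfl | rfl
      · exact hAmem
      · exact hBmem
      · rw [e2, ← e1]; exact hBmem
      · rw [e4]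
        exact Submodule.add_mem _ (Submodule.smul_mem _ _ (Submodule.add_mem _ hAmem hBmem)) hAmem
    · apply Submodule.span_mono
      intro x hx
      simp only [Set.mem_insert_iff, Set.mem_singleton_iff] at hx ⊢
      tauto
  have efr : Module.finrank ℝ (Submodule.span ℝ {A, B, N₂ᵀ * N₁, N₂ᵀ * N₂}) ≤ 2 := by
    rw [espan]
    have : ({A, B} : Set (Matrix (Fin b) (Fin b) ℝ)) = Set.range ![A, B] := by
      ext x; simp [Matrix.range_cons, Matrix.range_empty]; tauto
    rw [this]
    exact finrank_range_le_card ![A, B]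
  refine ⟨e1, e2, e3, e4, espan, efr, ?_⟩
  intro Y₁ Y₂ Y₃ t₁ t₂ t₃ _ _ hli heq
  have hrng : ({(1 : Matrix (Fin b) (Fin b) ℝ), Y₁, Y₂, Y₃} : Set _) =
      Set.range ![(1 : Matrix (Fin b) (Fin b) ℝ), Y₁, Y₂, Y₃] := by
    ext x; simp [Matrix.range_cons, Matrix.range_empty]; tauto
  have hrk4 : Module.finrank ℝ
      (Submodule.span ℝ {(1 : Matrix (Fin b) (Fin b) ℝ), Y₁, Y₂, Y₃}) = 4 := by
    rw [hrng, finrank_span_eq_card hli]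
    simp
  have hsub : Submodule.span ℝ
      (insert (1 : Matrix (Fin b) (Fin b) ℝ) {A, B, N₂ᵀ * N₁, N₂ᵀ * N₂}) =
      Submodule.span ℝ {(1 : Matrix (Fin b) (Fin b) ℝ), A, B} := by
    rw [Submodule.span_insert, espan, ← Submodule.span_insert]
  have hle3 : Module.finrank ℝ
      (Submodule.span ℝ
        (insert (1 : Matrix (Fin b) (Fin b) ℝ) {A, B, N₂ᵀ * N₁, N₂ᵀ * N₂})) ≤ 3 := by
    rw [hsub]
    have : ({(1 : Matrix (Fin b) (Fin b) ℝ), A, B} : Set _) =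
        Set.range ![(1 : Matrix (Fin b) (Fin b) ℝ), A, B] := by
      ext x; simp [Matrix.range_cons, Matrix.range_empty]; tauto
    rw [this]
    exact finrank_range_le_card ![(1 : Matrix (Fin b) (Fin b) ℝ), A, B]
  rw [heq, hrk4] at hle3
  omega
end
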